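/- arXiv:2304.08669 — 8 statements merged into one kernel-verified Lean document; each statement's English description precedes it below -/
import Mathlib

section
/- Let f : [1,∞) → (0,∞) have growth exponent 0, i.e. log f(r)/log r → 0 as r → ∞, and suppose there exist c, κ, δ > 0 with f(r) ≥ δ and c⁻¹ α^{-κ} f(r) ≤ f(α r) ≤ c α^{κ} f(r) for all α, r ≥ 1. Then there exists f_up : [1,∞) → (0,∞) such that: (a) f_up ≥ f; (b) liminf_{r→∞} f_up(r)/f(r) < ∞; (c) f_up is eventually nondecreasing; (d) log f_up(r)/log r is nonincreasing in r; and (e) f_up has regular growth exponent 0, meaning that for every ε > 0 there exist β, r₀, C such that for r ≥ r₀ one has α^{-ε} ≤ f_up(α r)/f_up(r) ≤ α^{ε} for α ≥ β and C⁻¹ ≤ f_up(α r)/f_up(r) ≤ C for 1 ≤ α < β. -/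
/-- `f` has regular growth exponent `χ` (formulation (1.9) of the paper):
for every `ε > 0` there are `β, r₀, C ≥ 1` such that for `r ≥ r₀`,
`α^(χ-ε) ≤ f(αr)/f(r) ≤ α^(χ+ε)` for `α ≥ β` and `C⁻¹ ≤ f(αr)/f(r) ≤ C` for `1 ≤ α < β`. -/
def HasRegularGrowthExponent (f : ℝ → ℝ) (χ : ℝ) : Prop :=
  ∀ ε : ℝ, 0 < ε → ∃ β r₀ C : ℝ, 1 ≤ β ∧ 1 ≤ r₀ ∧ 1 ≤ C ∧
    ∀ r α : ℝ, r₀ ≤ r → 1 ≤ α →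
      (β ≤ α → α ^ (χ - ε) ≤ f (α * r) / f r ∧ f (α * r) / f r ≤ α ^ (χ + ε)) ∧
      (α < β → C⁻¹ ≤ f (α * r) / f r ∧ f (α * r) / f r ≤ C)

/-!
In logarithmic coordinates `u y = log f (exp (y - 1)) - log δ₀` is nonnegative, grows at most
linearly and `u y / y → 0`. Its least quasiconcave majorant
`H x = sup_{y ≥ 1} u y * min 1 (x / y)` is nondecreasing with `H x / x` nonincreasing, and
`H (x + h) ≤ H x + h * sup_{y > x} u y / y`; so `f_up r = exp (H (1 + log r))` has regular growth
exponent `0`. Along a sequence `x → ∞`, `H` stays within a bounded distance of `u`: trivially if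
`u` is bounded, and otherwise at approximate maximisers of `u y - s * y` for slopes `s → 0`.
-/

open Real Filter Set

/-- The least function above `u` on `[1, ∞)` that is nondecreasing with `x ↦ H x / x`
nonincreasing. -/
noncomputable def quasiconcaveMajorant (u : ℝ → ℝ) (x : ℝ) : ℝ :=
  ⨆ y : Ici (1 : ℝ), u y * min 1 (x / y)

lemma exists_forall_le_add_of_bddAbove {α : Type*} {φ : α → ℝ} {S : Set α} (hS : S.Nonempty)
    (hφ : BddAbove (φ '' S)) {ε : ℝ} (hε : 0 < ε) : ∃ x ∈ S, ∀ y ∈ S, φ y ≤ φ x + ε := by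
  obtain ⟨_, ⟨x, hx, rfl⟩, hlt⟩ := exists_lt_of_lt_csSup (hS.image φ) (sub_lt_self _ hε)
  exact ⟨x, hx, fun y hy => by linarith [le_csSup hφ (mem_image_of_mem φ hy)]⟩

namespace quasiconcaveMajorant

variable {u : ℝ → ℝ} {A x : ℝ}

lemma bddAbove_range (hu0 : ∀ y, 1 ≤ y → 0 ≤ u y) (hA : ∀ y, 1 ≤ y → u y ≤ A * y)
    (hx : 0 ≤ x) : BddAbove (range fun y : Ici (1 : ℝ) => u y * min 1 (x / y)) := by
  refine ⟨A * x, ?_⟩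
  rintro _ ⟨⟨y, hy⟩, rfl⟩
  have hy0 : 0 < (y : ℝ) := lt_of_lt_of_le one_pos hy
  calc u y * min 1 (x / y) ≤ u y * (x / y) :=
        mul_le_mul_of_nonneg_left (min_le_right _ _) (hu0 y hy)
    _ = u y / y * x := by ring
    _ ≤ A * x := mul_le_mul_of_nonneg_right ((div_le_iff₀ hy0).2 (hA y hy)) hx

lemma term_le (hu0 : ∀ y, 1 ≤ y → 0 ≤ u y) (hA : ∀ y, 1 ≤ y → u y ≤ A * y) (hx : 0 ≤ x)
    {y : ℝ} (hy : 1 ≤ y) : u y * min 1 (x / y) ≤ quasiconcaveMajorant u x :=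
  le_ciSup (f := fun y : Ici (1 : ℝ) => u y * min 1 (x / y)) (bddAbove_range hu0 hA hx) ⟨y, hy⟩

lemma self_le (hu0 : ∀ y, 1 ≤ y → 0 ≤ u y) (hA : ∀ y, 1 ≤ y → u y ≤ A * y) (hx : 1 ≤ x) :
    u x ≤ quasiconcaveMajorant u x := by
  simpa [div_self (by positivity : x ≠ 0)] using term_le hu0 hA (zero_le_one.trans hx) hx

lemma nonneg (hu0 : ∀ y, 1 ≤ y → 0 ≤ u y) (hA : ∀ y, 1 ≤ y → u y ≤ A * y) (hx : 1 ≤ x) :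
    0 ≤ quasiconcaveMajorant u x :=
  (hu0 x hx).trans (self_le hu0 hA hx)

lemma mono (hu0 : ∀ y, 1 ≤ y → 0 ≤ u y) (hA : ∀ y, 1 ≤ y → u y ≤ A * y) {x' : ℝ}
    (hx : 0 ≤ x) (hxx' : x ≤ x') : quasiconcaveMajorant u x ≤ quasiconcaveMajorant u x' := by
  refine ciSup_le fun ⟨y, hy⟩ => le_trans ?_ (term_le hu0 hA (hx.trans hxx') hy)
  have hy0 : 0 < (y : ℝ) := lt_of_lt_of_le one_pos hy
  gcongr
  exact hu0 y hy

lemma le_div_mul (hu0 : ∀ y, 1 ≤ y → 0 ≤ u y) (hA : ∀ y, 1 ≤ y → u y ≤ A * y) {x' : ℝ}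
    (hx : 0 < x) (hxx' : x ≤ x') :
    quasiconcaveMajorant u x' ≤ x' / x * quasiconcaveMajorant u x := by
  refine ciSup_le fun ⟨y, hy⟩ => ?_
  have hy0 : 0 < (y : ℝ) := lt_of_lt_of_le one_pos hy
  have hratio : 0 ≤ x' / x := div_nonneg (hx.le.trans hxx') hx.le
  have hmin : min 1 (x' / y) ≤ x' / x * min 1 (x / y) := by
    rw [mul_min_of_nonneg _ _ hratio, mul_one]
    refine min_le_min ((one_le_div hx).2 hxx') (le_of_eq ?_)
    field_simp
  calc u y * min 1 (x' / y) ≤ u y * (x' / x * min 1 (x / y)) :=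
        mul_le_mul_of_nonneg_left hmin (hu0 y hy)
    _ = x' / x * (u y * min 1 (x / y)) := by ring
    _ ≤ x' / x * quasiconcaveMajorant u x :=
        mul_le_mul_of_nonneg_left (term_le hu0 hA hx.le hy) hratio

lemma add_le (hu0 : ∀ y, 1 ≤ y → 0 ≤ u y) (hA : ∀ y, 1 ≤ y → u y ≤ A * y) {h ε : ℝ}
    (hx : 0 ≤ x) (hh : 0 ≤ h) (hε0 : 0 ≤ ε) (hε : ∀ y, x < y → u y / y ≤ ε) :
    quasiconcaveMajorant u (x + h) ≤ quasiconcaveMajorant u x + ε * h := by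
  refine ciSup_le fun ⟨y, hy⟩ => ?_
  have hy0 : 0 < (y : ℝ) := lt_of_lt_of_le one_pos hy
  have hterm := term_le hu0 hA hx hy
  rcases le_or_gt (y : ℝ) x with hyx | hxy
  · have hxy : 1 ≤ x / y := (one_le_div hy0).2 hyx
    have hxhy : 1 ≤ (x + h) / y := (one_le_div hy0).2 (by linarith)
    rw [min_eq_left hxy] at hterm
    rw [min_eq_left hxhy]
    nlinarith
  · calc u y * min 1 ((x + h) / y) ≤ u y * (x / y + h / y) :=
          mul_le_mul_of_nonneg_left ((min_le_right _ _).trans (add_div _ _ _).le) (hu0 y hy)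
      _ = u y * min 1 (x / y) + u y / y * h := by
          rw [min_eq_right ((div_le_one hy0).2 hxy.le)]; ring
      _ ≤ quasiconcaveMajorant u x + ε * h :=
          add_le_add hterm (mul_le_mul_of_nonneg_right (hε y hxy) hh)

lemma eventually_add_le (hu0 : ∀ y, 1 ≤ y → 0 ≤ u y) (hA : ∀ y, 1 ≤ y → u y ≤ A * y)
    (hlim : Tendsto (fun y => u y / y) atTop (nhds 0)) {ε : ℝ} (hε : 0 < ε) :
    ∀ᶠ x in atTop, ∀ h, 0 ≤ h →
      quasiconcaveMajorant u (x + h) ≤ quasiconcaveMajorant u x + ε * h := by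
  obtain ⟨T, hT⟩ := eventually_atTop.1 (hlim.eventually (ge_mem_nhds hε))
  filter_upwards [eventually_ge_atTop (max T 0)] with x hx h hh
  exact add_le hu0 hA (le_of_max_le_right hx) hh hε.le
    fun y hxy => hT y ((le_of_max_le_left hx).trans hxy.le)

lemma le_of_forall_le_const (hu0 : ∀ y, 1 ≤ y → 0 ≤ u y) {B : ℝ} (hB : ∀ y, 1 ≤ y → u y ≤ B) :
    quasiconcaveMajorant u x ≤ B :=
  ciSup_le fun ⟨y, hy⟩ =>
    (mul_le_of_le_one_right (hu0 y hy) (min_le_left _ _)).trans (hB y hy)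

lemma le_add_two_of_forall_sub_mul_le (hu0 : ∀ y, 1 ≤ y → 0 ≤ u y) {s : ℝ} (hs0 : 0 ≤ s)
    (hs1 : s ≤ 1) (hx : 1 ≤ x) (hmax : ∀ y, 1 ≤ y → u y - s * y ≤ u x - s * x + 1) :
    quasiconcaveMajorant u x ≤ u x + 2 := by
  refine ciSup_le fun ⟨y, hy⟩ => ?_
  have hy0 : 0 < (y : ℝ) := lt_of_lt_of_le one_pos hy
  have hmaxy := hmax y hy
  -- `u` lies below the line of slope `s` through `(x, u x + 1)`
  rcases le_or_gt (y : ℝ) x with hyx | hxy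
  · rw [min_eq_left ((one_le_div hy0).2 hyx), mul_one]
    nlinarith
  · rw [min_eq_right ((div_le_one hy0).2 hxy.le)]
    have hsx : s * x ≤ u x + 2 := by linarith [hmax 1 le_rfl, hu0 1 le_rfl]
    have ht0 : 0 < x / y := by positivity
    have ht1 : x / y ≤ 1 := (div_le_one hy0).2 hxy.le
    have hxt : s * y * (x / y) = s * x := by field_simp
    rcases le_or_gt 0 (u x - s * x + 1) with ha | ha <;> nlinarith


lemma bddAbove_sub_mul (hu0 : ∀ y, 1 ≤ y → 0 ≤ u y) (hA : ∀ y, 1 ≤ y → u y ≤ A * y)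
    (hlim : Tendsto (fun y => u y / y) atTop (nhds 0)) {s : ℝ} (hs : 0 < s) :
    BddAbove ((fun y => u y - s * y) '' Ici 1) := by
  have hA0 : 0 ≤ A := by linarith [hA 1 le_rfl, hu0 1 le_rfl]
  obtain ⟨Y, hY⟩ := eventually_atTop.1 (hlim.eventually (ge_mem_nhds hs))
  refine ⟨max 0 (A * Y), ?_⟩
  rintro _ ⟨y, hy, rfl⟩
  have hy0 : 0 < y := lt_of_lt_of_le one_pos hy
  rcases le_or_gt Y y with hYy | hyY
  · have := (div_le_iff₀ hy0).1 (hY y hYy)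
    exact le_max_of_le_left (by linarith)
  · have := hA y hy
    exact le_max_of_le_right (by nlinarith)

lemma exists_forall_sub_mul_le_of_not_bddAbove (hu0 : ∀ y, 1 ≤ y → 0 ≤ u y)
    (hA : ∀ y, 1 ≤ y → u y ≤ A * y) (hlim : Tendsto (fun y => u y / y) atTop (nhds 0))
    (hunb : ¬ BddAbove (u '' Ici 1)) (X : ℝ) :
    ∃ s x, 0 ≤ s ∧ s ≤ 1 ∧ X ≤ x ∧ 1 ≤ x ∧ ∀ y, 1 ≤ y → u y - s * y ≤ u x - s * x + 1 := by
  have hA0 : 0 ≤ A := by linarith [hA 1 le_rfl, hu0 1 le_rfl]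
  -- `u y₀` beats the bound `A * max X 1` of `u` on `[1, X]`, so for `s = 1 / (2 * y₀)` the
  -- approximate maximiser cannot lie in `[1, X)`
  obtain ⟨_, ⟨y₀, hy₀, rfl⟩, hy₀X⟩ := not_bddAbove_iff.1 hunb (A * max X 1 + 2)
  have hy₀ : (1 : ℝ) ≤ y₀ := hy₀
  have hs : 0 < 1 / (2 * y₀) := by positivity
  obtain ⟨x, hx, hmax⟩ :=
    exists_forall_le_add_of_bddAbove nonempty_Ici (bddAbove_sub_mul hu0 hA hlim hs) one_pos
  have hx : (1 : ℝ) ≤ x := hx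
  refine ⟨1 / (2 * y₀), x, hs.le, ?_, ?_, hx, fun y hy => hmax y hy⟩
  · rw [div_le_one (by positivity)]
    linarith
  · by_contra! hxX
    have hux : u x ≤ A * max X 1 :=
      (hA x hx).trans (mul_le_mul_of_nonneg_left (hxX.le.trans (le_max_left _ _)) hA0)
    have hsy₀ : 1 / (2 * y₀) * y₀ = 1 / 2 := by field_simp
    have := hmax y₀ hy₀
    nlinarith

theorem exists_frequently_le_add (hu0 : ∀ y, 1 ≤ y → 0 ≤ u y)
    (hA : ∀ y, 1 ≤ y → u y ≤ A * y) (hlim : Tendsto (fun y => u y / y) atTop (nhds 0)) :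
    ∃ K, ∃ᶠ x in atTop, quasiconcaveMajorant u x ≤ u x + K := by
  by_cases hb : BddAbove (u '' Ici 1)
  · obtain ⟨B, hB⟩ := hb
    have hB' : ∀ y, 1 ≤ y → u y ≤ B := fun y hy => hB (mem_image_of_mem u hy)
    refine ⟨B, (eventually_ge_atTop 1).frequently.mono fun x hx => ?_⟩
    linarith [le_of_forall_le_const hu0 hB' (x := x), hu0 x hx]
  · refine ⟨2, frequently_atTop.2 fun X => ?_⟩
    obtain ⟨s, x, hs0, hs1, hXx, hx, hmax⟩ :=
      exists_forall_sub_mul_le_of_not_bddAbove hu0 hA hlim hb X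
    exact ⟨x, hXx, le_add_two_of_forall_sub_mul_le hu0 hs0 hs1 hx hmax⟩

end quasiconcaveMajorant

/-- The shift `1 + log r` keeps `upperMajorant u 1 = exp (quasiconcaveMajorant u 1)` above
`exp (u 1)`, while `log (upperMajorant u r) / log r` still decreases for all `r > 1`. -/
noncomputable def upperMajorant (u : ℝ → ℝ) (r : ℝ) : ℝ :=
  exp (quasiconcaveMajorant u (1 + log r))

namespace upperMajorant

variable {u : ℝ → ℝ} {A : ℝ}

lemma exp_le (hu0 : ∀ y, 1 ≤ y → 0 ≤ u y) (hA : ∀ y, 1 ≤ y → u y ≤ A * y) {r : ℝ}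
    (hr : 1 ≤ r) : exp (u (1 + log r)) ≤ upperMajorant u r :=
  exp_le_exp.2 (quasiconcaveMajorant.self_le hu0 hA (le_add_of_nonneg_right (log_nonneg hr)))

lemma monotoneOn (hu0 : ∀ y, 1 ≤ y → 0 ≤ u y) (hA : ∀ y, 1 ≤ y → u y ≤ A * y) :
    MonotoneOn (upperMajorant u) (Ici 1) := fun r hr s _ hrs =>
  exp_le_exp.2 <| quasiconcaveMajorant.mono hu0 hA (by linarith [log_nonneg (mem_Ici.1 hr)])
    (by gcongr; linarith [mem_Ici.1 hr])

lemma log_div_log_le (hu0 : ∀ y, 1 ≤ y → 0 ≤ u y) (hA : ∀ y, 1 ≤ y → u y ≤ A * y)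
    {r s : ℝ} (hr : 1 < r) (hrs : r ≤ s) :
    log (upperMajorant u s) / log s ≤ log (upperMajorant u r) / log r := by
  simp only [upperMajorant, log_exp]
  set a := log r
  set b := log s
  have ha : 0 < a := log_pos hr
  have hab : a ≤ b := log_le_log (by linarith) hrs
  have hQ := quasiconcaveMajorant.nonneg hu0 hA (x := 1 + a) (by linarith)
  have hgrowth := quasiconcaveMajorant.le_div_mul hu0 hA (x := 1 + a) (x' := 1 + b)
    (by linarith) (by linarith)
  have hfactor : (1 + b) / (1 + a) * a ≤ b := by
    rw [div_mul_eq_mul_div, div_le_iff₀ (by linarith)]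
    nlinarith
  rw [div_le_div_iff₀ (ha.trans_le hab) ha]
  calc quasiconcaveMajorant u (1 + b) * a
      ≤ (1 + b) / (1 + a) * quasiconcaveMajorant u (1 + a) * a := by gcongr
    _ = (1 + b) / (1 + a) * a * quasiconcaveMajorant u (1 + a) := by ring
    _ ≤ b * quasiconcaveMajorant u (1 + a) := by gcongr
    _ = quasiconcaveMajorant u (1 + a) * b := mul_comm _ _

theorem hasRegularGrowthExponent_zero (hu0 : ∀ y, 1 ≤ y → 0 ≤ u y)
    (hA : ∀ y, 1 ≤ y → u y ≤ A * y) (hlim : Tendsto (fun y => u y / y) atTop (nhds 0)) :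
    HasRegularGrowthExponent (upperMajorant u) 0 := by
  intro ε hε
  obtain ⟨T, hT⟩ := eventually_atTop.1 (quasiconcaveMajorant.eventually_add_le hu0 hA hlim hε)
  refine ⟨1, max 1 (exp T), 1, le_rfl, le_max_left _ _, le_rfl, fun r α hr hα =>
    ⟨fun _ => ?_, fun hα1 => absurd hα hα1.not_ge⟩⟩
  have hr0 : 0 < r := one_pos.trans_le ((le_max_left _ _).trans hr)
  have hα0 : 0 < α := one_pos.trans_le hα
  have hlogr : 0 ≤ log r := log_nonneg ((le_max_left _ _).trans hr)
  have hTr : T ≤ 1 + log r := by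
    linarith [(le_log_iff_exp_le hr0).2 ((le_max_right _ _).trans hr)]
  have hlogα : 0 ≤ log α := log_nonneg hα
  have hratio : upperMajorant u (α * r) / upperMajorant u r =
      exp (quasiconcaveMajorant u (1 + log r + log α) - quasiconcaveMajorant u (1 + log r)) := by
    rw [upperMajorant, upperMajorant, log_mul hα0.ne' hr0.ne', ← exp_sub, add_comm (log α),
      ← add_assoc]
  have hmono := quasiconcaveMajorant.mono hu0 hA (x := 1 + log r) (by linarith)
    (le_add_of_nonneg_right hlogα)
  have hslow := hT _ hTr _ hlogα
  rw [hratio]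
  constructor
  · exact (rpow_le_one_of_one_le_of_nonpos hα (by linarith)).trans (one_le_exp (by linarith))
  · rw [zero_add, rpow_def_of_pos hα0]
    exact exp_le_exp.2 (by linarith)

lemma exists_le_exp_mul {K : ℝ} (hK : ∃ᶠ x in atTop, quasiconcaveMajorant u x ≤ u x + K)
    (R : ℝ) : ∃ r, R ≤ r ∧ 1 ≤ r ∧ upperMajorant u r ≤ exp K * exp (u (1 + log r)) := by
  obtain ⟨x, hx, hxK⟩ := frequently_atTop.1 hK (max 1 (R + 1))
  have hlog : 1 + log (exp (x - 1)) = x := by rw [log_exp]; ring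
  refine ⟨exp (x - 1), ?_, one_le_exp (by linarith [le_max_left 1 (R + 1)]), ?_⟩
  · linarith [add_one_le_exp (x - 1), le_max_right 1 (R + 1)]
  · rw [upperMajorant, hlog, ← exp_add]
    exact exp_le_exp.2 (by linarith)

end upperMajorant

noncomputable def logProfile (f : ℝ → ℝ) (δ₀ y : ℝ) : ℝ :=
  log (f (exp (y - 1))) - log δ₀

namespace logProfile

variable {f : ℝ → ℝ} {δ₀ : ℝ}

lemma exp_one_add_log (hδ₀ : 0 < δ₀) {r : ℝ} (hr : 0 < r) (hfr : 0 < f r) :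
    exp (logProfile f δ₀ (1 + log r)) = f r / δ₀ := by
  rw [logProfile, add_sub_cancel_left, exp_log hr, exp_sub, exp_log hfr, exp_log hδ₀]

lemma nonneg (hδ₀ : 0 < δ₀) (hf : ∀ r, 1 ≤ r → δ₀ ≤ f r) {y : ℝ} (hy : 1 ≤ y) :
    0 ≤ logProfile f δ₀ y :=
  sub_nonneg.2 (log_le_log hδ₀ (hf _ (one_le_exp (by linarith))))

lemma exists_le_mul (hδ₀ : 0 < δ₀) (hf : ∀ r, 1 ≤ r → δ₀ ≤ f r) {c κ : ℝ} (hc : 0 < c)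
    (hκ : 0 ≤ κ) (hup : ∀ α, 1 ≤ α → f α ≤ c * α ^ κ * f 1) :
    ∃ A, ∀ y, 1 ≤ y → logProfile f δ₀ y ≤ A * y := by
  set a := log c + log (f 1) - log δ₀
  refine ⟨|a| + κ, fun y hy => ?_⟩
  have hf1 : 0 < f 1 := hδ₀.trans_le (hf 1 le_rfl)
  have hα : 1 ≤ exp (y - 1) := one_le_exp (by linarith)
  have hlog : log (f (exp (y - 1))) ≤ log c + κ * (y - 1) + log (f 1) := by
    calc log (f (exp (y - 1))) ≤ log (c * exp (y - 1) ^ κ * f 1) :=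
          log_le_log (hδ₀.trans_le (hf _ hα)) (hup _ hα)
      _ = log c + κ * (y - 1) + log (f 1) := by
          rw [log_mul (by positivity) hf1.ne', log_mul hc.ne' (by positivity),
            log_rpow (exp_pos _), log_exp]
  have ha : a ≤ |a| * y := (le_abs_self a).trans (le_mul_of_one_le_right (abs_nonneg a) hy)
  rw [logProfile]
  nlinarith

lemma tendsto_div (hexp0 : Tendsto (fun r => log (f r) / log r) atTop (nhds 0)) :
    Tendsto (fun y => logProfile f δ₀ y / y) atTop (nhds 0) := by
  have hshift : Tendsto (fun y : ℝ => log (f (exp (y - 1))) / (y - 1)) atTop (nhds 0) := by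
    simpa [Function.comp_def, sub_eq_add_neg] using
      hexp0.comp (tendsto_exp_atTop.comp (tendsto_atTop_add_const_right _ (-1) tendsto_id))
  have hratio : Tendsto (fun y : ℝ => 1 - y⁻¹) atTop (nhds 1) := by
    simpa using tendsto_const_nhds.sub (tendsto_inv_atTop_zero (𝕜 := ℝ))
  have hlim := (hshift.mul hratio).sub (tendsto_const_nhds (x := log δ₀).div_atTop tendsto_id)
  rw [zero_mul, sub_zero] at hlim
  refine hlim.congr' ((eventually_gt_atTop 1).mono fun y hy => ?_)
  have : y - 1 ≠ 0 := by linarith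
  simp only [logProfile, id]
  field_simp

end logProfile

theorem exists_upper_regular_majorant_general (f : ℝ → ℝ)
    (hexp0 : Filter.Tendsto (fun r : ℝ => Real.log (f r) / Real.log r)
      Filter.atTop (nhds 0))
    (hctrl : ∃ c κ δ : ℝ, 0 < c ∧ 0 < κ ∧ 0 < δ ∧
      ∀ α r : ℝ, 1 ≤ α → 1 ≤ r →
        δ ≤ f r ∧ c⁻¹ * α ^ (-κ) * f r ≤ f (α * r) ∧ f (α * r) ≤ c * α ^ κ * f r) :
    ∃ fup : ℝ → ℝ,
      (∀ r : ℝ, 1 ≤ r → 0 < fup r) ∧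
      (∀ r : ℝ, 1 ≤ r → f r ≤ fup r) ∧
      (∃ M : ℝ, ∀ R : ℝ, ∃ r : ℝ, R ≤ r ∧ 1 ≤ r ∧ fup r / f r ≤ M) ∧
      (∃ r₁ : ℝ, ∀ r s : ℝ, r₁ ≤ r → r ≤ s → fup r ≤ fup s) ∧
      (∀ r s : ℝ, 1 < r → r ≤ s →
        Real.log (fup s) / Real.log s ≤ Real.log (fup r) / Real.log r) ∧
      HasRegularGrowthExponent fup 0 := by
  obtain ⟨c, κ, δ, hc, hκ, hδ, hctrl⟩ := hctrl
  have hδ₀ : 0 < min δ 1 := lt_min hδ one_pos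
  have hfδ₀ : ∀ r, 1 ≤ r → min δ 1 ≤ f r := fun r hr =>
    (min_le_left _ _).trans (hctrl 1 r le_rfl hr).1
  have hfpos : ∀ r, 1 ≤ r → 0 < f r := fun r hr => hδ₀.trans_le (hfδ₀ r hr)
  have hup : ∀ α, 1 ≤ α → f α ≤ c * α ^ κ * f 1 := fun α hα => by
    simpa using (hctrl α 1 hα le_rfl).2.2
  set u := logProfile f (min δ 1)
  have hu0 : ∀ y, 1 ≤ y → 0 ≤ u y := fun y => logProfile.nonneg hδ₀ hfδ₀
  obtain ⟨A, hA⟩ := logProfile.exists_le_mul hδ₀ hfδ₀ hc hκ.le hup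
  have hexpu : ∀ r, 1 ≤ r → exp (u (1 + log r)) = f r / min δ 1 := fun r hr =>
    logProfile.exp_one_add_log hδ₀ (one_pos.trans_le hr) (hfpos r hr)
  obtain ⟨K, hK⟩ :=
    quasiconcaveMajorant.exists_frequently_le_add hu0 hA (logProfile.tendsto_div hexp0)
  refine ⟨upperMajorant u, fun r _ => exp_pos _, fun r hr => ?_, ⟨exp K / min δ 1, fun R => ?_⟩,
    ⟨1, fun r s hr hrs => upperMajorant.monotoneOn hu0 hA hr (hr.trans hrs) hrs⟩,
    fun r s hr hrs => upperMajorant.log_div_log_le hu0 hA hr hrs,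
    upperMajorant.hasRegularGrowthExponent_zero hu0 hA (logProfile.tendsto_div hexp0)⟩
  · calc f r ≤ f r / min δ 1 := le_div_self (hfpos r hr).le hδ₀ (min_le_right _ _)
      _ = exp (u (1 + log r)) := (hexpu r hr).symm
      _ ≤ upperMajorant u r := upperMajorant.exp_le hu0 hA hr
  · obtain ⟨r, hRr, hr, hle⟩ := upperMajorant.exists_le_exp_mul hK R
    refine ⟨r, hRr, hr, (div_le_iff₀ (hfpos r hr)).2 ?_⟩
    calc upperMajorant u r ≤ exp K * (f r / min δ 1) := hexpu r hr ▸ hle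
      _ = exp K / min δ 1 * f r := by ring

/-- Lemma 1.1: a positive function with growth exponent 0 and
polynomial two-sided growth control admits an upper-regular majorant `f_up`. -/
theorem exists_upper_regular_majorant (f : ℝ → ℝ)
    (hpos : ∀ r : ℝ, 1 ≤ r → 0 < f r)
    (hexp0 : Filter.Tendsto (fun r : ℝ => Real.log (f r) / Real.log r)
      Filter.atTop (nhds 0))
    (hctrl : ∃ c κ δ : ℝ, 0 < c ∧ 0 < κ ∧ 0 < δ ∧
      ∀ α r : ℝ, 1 ≤ α → 1 ≤ r →
        δ ≤ f r ∧ c⁻¹ * α ^ (-κ) * f r ≤ f (α * r) ∧ f (α * r) ≤ c * α ^ κ * f r) :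
    ∃ fup : ℝ → ℝ,
      (∀ r : ℝ, 1 ≤ r → 0 < fup r) ∧
      (∀ r : ℝ, 1 ≤ r → f r ≤ fup r) ∧
      (∃ M : ℝ, ∀ R : ℝ, ∃ r : ℝ, R ≤ r ∧ 1 ≤ r ∧ fup r / f r ≤ M) ∧
      (∃ r₁ : ℝ, ∀ r s : ℝ, r₁ ≤ r → r ≤ s → fup r ≤ fup s) ∧
      (∀ r s : ℝ, 1 < r → r ≤ s →
        Real.log (fup s) / Real.log s ≤ Real.log (fup r) / Real.log r) ∧
      HasRegularGrowthExponent fup 0 :=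
  exists_upper_regular_majorant_general f hexp0 hctrl
end

section
/- For a function f : [1,∞) → (0,∞), the following two conditions are equivalent: (1) f has regular growth exponent χ, i.e. lim_{α,r→∞} |(log f(αr) − log f(r))/log α − χ| = 0 and for each β > 0, liminf_{r→∞} inf_{1≤α≤β} [log f(αr) − log f(r)] > −∞ and limsup_{r→∞} sup_{1≤α≤β} [log f(αr) − log f(r)] < ∞; (2) for every ε > 0 there exist β ≥ 1, r₀ ≥ 1 and c₃ ≥ 1 such that for all r ≥ r₀: α^{χ−ε} ≤ f(αr)/f(r) ≤ α^{χ+ε} whenever α ≥ β, and c₃⁻¹ ≤ f(αr)/f(r) ≤ c₃ whenever 1 ≤ α < β. -/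
/-- Formulation (1): the limit/liminf/limsup definition of regular growth exponent. -/
def RegGrowthLimit (f : ℝ → ℝ) (χ : ℝ) : Prop :=
  (∀ ε : ℝ, 0 < ε → ∃ α₀ r₀ : ℝ, 1 < α₀ ∧ 1 ≤ r₀ ∧
    ∀ α r : ℝ, α₀ ≤ α → r₀ ≤ r →
      |(Real.log (f (α * r)) - Real.log (f r)) / Real.log α - χ| ≤ ε) ∧
  (∀ β : ℝ, 0 < β →
    (∃ m r₀ : ℝ, ∀ r : ℝ, r₀ ≤ r → ∀ α : ℝ, 1 ≤ α → α ≤ β →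
      m ≤ Real.log (f (α * r)) - Real.log (f r)) ∧
    (∃ M r₀ : ℝ, ∀ r : ℝ, r₀ ≤ r → ∀ α : ℝ, 1 ≤ α → α ≤ β →
      Real.log (f (α * r)) - Real.log (f r) ≤ M))

/-- Formulation (2): the ratio-bound definition of regular growth exponent. -/
def RegGrowthRatio (f : ℝ → ℝ) (χ : ℝ) : Prop :=
  ∀ ε : ℝ, 0 < ε → ∃ β r₀ c₃ : ℝ, 1 ≤ β ∧ 1 ≤ r₀ ∧ 1 ≤ c₃ ∧
    ∀ r α : ℝ, r₀ ≤ r → 1 ≤ α →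
      (β ≤ α → α ^ (χ - ε) ≤ f (α * r) / f r ∧ f (α * r) / f r ≤ α ^ (χ + ε)) ∧
      (α < β → c₃⁻¹ ≤ f (α * r) / f r ∧ f (α * r) / f r ≤ c₃)

/-!
Both conditions are statements about `L(α, r) = log f(αr) - log f(r) = log (f(αr) / f(r))`.
Taking logarithms, the power bounds `α^(χ ∓ ε)` say `|L - χ log α| ≤ ε log α`, which for `α > 1`
is `|L / log α - χ| ≤ ε`, and the bounds `c₃^(∓1)` say `|L| ≤ log c₃`. Hence (1) gives (2) with
`β = α₀` and `c₃ = exp C` for a bound `C` of `|L|` on `1 ≤ α ≤ α₀`. Conversely (2) gives the limit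
in (1) with `α₀ = β + 1`, and, by the case `ε = 1`, the bound
`|L| ≤ max (log c₃) ((|χ| + 1) log β')` for `1 ≤ α ≤ β'`.
-/

open Real

lemma abs_div_sub_le_iff {a b s ε : ℝ} (hb : 0 < b) :
    |a / b - s| ≤ ε ↔ |a - s * b| ≤ ε * b := by
  have hsplit : a - s * b = (a / b - s) * b := by field_simp
  rw [hsplit, abs_mul, abs_of_pos hb, mul_le_mul_iff_of_pos_right hb]

lemma abs_le_of_abs_sub_mul_le {y s ε b : ℝ} (hb : 0 ≤ b) (h : |y - s * b| ≤ ε * b) :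
    |y| ≤ (|s| + ε) * b :=
  calc |y| ≤ |y - s * b| + |s * b| := by linarith [abs_sub_abs_le_abs_sub y (s * b)]
    _ ≤ ε * b + |s| * b := by rw [abs_mul, abs_of_nonneg hb]; gcongr
    _ = (|s| + ε) * b := by ring

lemma rpow_le_and_le_rpow_iff {α x s ε : ℝ} (hα : 0 < α) (hx : 0 < x) :
    α ^ (s - ε) ≤ x ∧ x ≤ α ^ (s + ε) ↔ |log x - s * log α| ≤ ε * log α := by
  rw [abs_sub_le_iff, rpow_le_iff_le_log hα hx, le_rpow_iff_log_le hx hα]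
  constructor <;> rintro ⟨h₁, h₂⟩ <;> constructor <;> linarith

lemma inv_le_and_le_iff_abs_log_le {x c : ℝ} (hx : 0 < x) (hc : 0 < c) :
    c⁻¹ ≤ x ∧ x ≤ c ↔ |log x| ≤ log c := by
  rw [abs_le, ← log_inv, log_le_log_iff (inv_pos.2 hc) hx, log_le_log_iff hx hc]

section

variable {f : ℝ → ℝ} {χ ε α r c : ℝ}

lemma div_apply_mul_pos (hpos : ∀ r : ℝ, 1 ≤ r → 0 < f r) (hα : 1 ≤ α) (hr : 1 ≤ r) :
    0 < f (α * r) / f r :=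
  div_pos (hpos _ (one_le_mul_of_one_le_of_one_le hα hr)) (hpos r hr)

lemma log_div_apply_mul (hpos : ∀ r : ℝ, 1 ≤ r → 0 < f r) (hα : 1 ≤ α) (hr : 1 ≤ r) :
    log (f (α * r) / f r) = log (f (α * r)) - log (f r) :=
  log_div (hpos _ (one_le_mul_of_one_le_of_one_le hα hr)).ne' (hpos r hr).ne'

lemma rpow_le_div_apply_mul_le_rpow_iff (hpos : ∀ r : ℝ, 1 ≤ r → 0 < f r) (hα : 1 ≤ α)
    (hr : 1 ≤ r) :
    α ^ (χ - ε) ≤ f (α * r) / f r ∧ f (α * r) / f r ≤ α ^ (χ + ε) ↔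
      |log (f (α * r)) - log (f r) - χ * log α| ≤ ε * log α := by
  rw [rpow_le_and_le_rpow_iff (by linarith) (div_apply_mul_pos hpos hα hr),
    log_div_apply_mul hpos hα hr]

lemma inv_le_div_apply_mul_le_iff (hpos : ∀ r : ℝ, 1 ≤ r → 0 < f r) (hα : 1 ≤ α) (hr : 1 ≤ r)
    (hc : 0 < c) :
    c⁻¹ ≤ f (α * r) / f r ∧ f (α * r) / f r ≤ c ↔ |log (f (α * r)) - log (f r)| ≤ log c := by
  rw [inv_le_and_le_iff_abs_log_le (div_apply_mul_pos hpos hα hr) hc,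
    log_div_apply_mul hpos hα hr]

end

namespace RegGrowthLimit

variable {f : ℝ → ℝ} {χ : ℝ}

lemma exists_abs_log_sub_le (h : RegGrowthLimit f χ) {β : ℝ} (hβ : 0 < β) :
    ∃ C r₀ : ℝ, ∀ r : ℝ, r₀ ≤ r → ∀ α : ℝ, 1 ≤ α → α ≤ β →
      |log (f (α * r)) - log (f r)| ≤ C := by
  obtain ⟨⟨m, r₁, hm⟩, ⟨M, r₂, hM⟩⟩ := h.2 β hβ
  refine ⟨max (-m) M, max r₁ r₂, fun r hr α hα hαβ => abs_le.2 ⟨?_, ?_⟩⟩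
  · linarith [hm r (le_of_max_le_left hr) α hα hαβ, le_max_left (-m) M]
  · exact (hM r (le_of_max_le_right hr) α hα hαβ).trans (le_max_right _ _)

theorem regGrowthRatio (h : RegGrowthLimit f χ) (hpos : ∀ r : ℝ, 1 ≤ r → 0 < f r) :
    RegGrowthRatio f χ := by
  intro ε hε
  obtain ⟨α₀, r₀, hα₀, hr₀, hlim⟩ := h.1 ε hε
  obtain ⟨C, r₁, hC⟩ := h.exists_abs_log_sub_le (by linarith : 0 < α₀)
  refine ⟨α₀, max r₀ r₁, exp (max C 0), hα₀.le, le_max_of_le_left hr₀,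
    one_le_exp (le_max_right _ _), fun r α hr hα => ?_⟩
  have hr1 : 1 ≤ r := hr₀.trans (le_of_max_le_left hr)
  refine ⟨fun hα₀α => ?_, fun hαα₀ => ?_⟩
  · rw [rpow_le_div_apply_mul_le_rpow_iff hpos hα hr1,
      ← abs_div_sub_le_iff (log_pos (hα₀.trans_le hα₀α))]
    exact hlim α r hα₀α (le_of_max_le_left hr)
  · rw [inv_le_div_apply_mul_le_iff hpos hα hr1 (exp_pos _), log_exp]
    exact (hC r (le_of_max_le_right hr) α hα hαα₀.le).trans (le_max_left _ _)

end RegGrowthLimit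

namespace RegGrowthRatio

variable {f : ℝ → ℝ} {χ : ℝ}

lemma exists_abs_div_log_sub_le (h : RegGrowthRatio f χ) (hpos : ∀ r : ℝ, 1 ≤ r → 0 < f r)
    {ε : ℝ} (hε : 0 < ε) :
    ∃ α₀ r₀ : ℝ, 1 < α₀ ∧ 1 ≤ r₀ ∧ ∀ α r : ℝ, α₀ ≤ α → r₀ ≤ r →
      |(log (f (α * r)) - log (f r)) / log α - χ| ≤ ε := by
  obtain ⟨β, r₀, c, hβ, hr₀, -, hratio⟩ := h ε hε
  refine ⟨β + 1, r₀, by linarith, hr₀, fun α r hα hr => ?_⟩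
  rw [abs_div_sub_le_iff (log_pos (by linarith)),
    ← rpow_le_div_apply_mul_le_rpow_iff hpos (by linarith) (hr₀.trans hr)]
  exact (hratio r α hr (by linarith)).1 (by linarith)

lemma exists_abs_log_sub_le (h : RegGrowthRatio f χ) (hpos : ∀ r : ℝ, 1 ≤ r → 0 < f r)
    (β' : ℝ) :
    ∃ C r₀ : ℝ, ∀ r : ℝ, r₀ ≤ r → ∀ α : ℝ, 1 ≤ α → α ≤ β' →
      |log (f (α * r)) - log (f r)| ≤ C := by
  obtain ⟨β, r₀, c, -, hr₀, hc, hratio⟩ := h 1 one_pos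
  refine ⟨max (log c) ((|χ| + 1) * log β'), r₀, fun r hr α hα hαβ' => ?_⟩
  have hr1 : 1 ≤ r := hr₀.trans hr
  rcases lt_or_ge α β with hαβ | hβα
  · refine le_max_of_le_left ?_
    rw [← inv_le_div_apply_mul_le_iff hpos hα hr1 (by linarith)]
    exact (hratio r α hr hα).2 hαβ
  · have hpow := (rpow_le_div_apply_mul_le_rpow_iff hpos hα hr1).1 ((hratio r α hr hα).1 hβα)
    refine le_max_of_le_right ((abs_le_of_abs_sub_mul_le (log_nonneg hα) hpow).trans ?_)
    gcongr

theorem regGrowthLimit (h : RegGrowthRatio f χ) (hpos : ∀ r : ℝ, 1 ≤ r → 0 < f r) :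
    RegGrowthLimit f χ := by
  refine ⟨fun _ hε => h.exists_abs_div_log_sub_le hpos hε, fun β _ => ?_⟩
  obtain ⟨C, r₀, hC⟩ := h.exists_abs_log_sub_le hpos β
  exact ⟨⟨-C, r₀, fun r hr α hα hαβ => neg_le_of_abs_le (hC r hr α hα hαβ)⟩,
    ⟨C, r₀, fun r hr α hα hαβ => le_of_abs_le (hC r hr α hα hαβ)⟩⟩

end RegGrowthRatio

theorem regGrowth_limit_iff_ratio_general (f : ℝ → ℝ) (χ : ℝ)
    (hpos : ∀ r : ℝ, 1 ≤ r → 0 < f r) :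
    RegGrowthLimit f χ ↔ RegGrowthRatio f χ :=
  ⟨fun h => h.regGrowthRatio hpos, fun h => h.regGrowthLimit hpos⟩

/-- the two formulations of "regular growth exponent χ" are equivalent
for a function positive on `[1,∞)`. -/
theorem regGrowth_limit_iff_ratio (f : ℝ → ℝ) (χ : ℝ) (hχ : 0 ≤ χ)
    (hpos : ∀ r : ℝ, 1 ≤ r → 0 < f r) :
    RegGrowthLimit f χ ↔ RegGrowthRatio f χ :=
  regGrowth_limit_iff_ratio_general f χ hpos
end

section
/- If f : [1,∞) → (0,∞) has regular growth exponent χ ≥ 0, then f has growth exponent χ, i.e. lim_{r→∞} log f(r)/log r = χ. -/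
open Real Filter Set Asymptotics

section MultiplicativeIncrements

variable {u : ℝ → ℝ} {α b δ ε K : ℝ}

lemma abs_comp_pow_mul_sub_le (hα : 1 ≤ α) (hb : 0 ≤ b)
    (hstep : ∀ r, b ≤ r → |u (α * r) - u r| ≤ δ) (n : ℕ) {s : ℝ} (hs : b ≤ s) :
    |u (α ^ n * s) - u s| ≤ n * δ := by
  induction n with
  | zero => simp
  | succ n ih =>
    have hbn : b ≤ α ^ n * s := hs.trans (le_mul_of_one_le_left (hb.trans hs) (one_le_pow₀ hα))
    calc |u (α ^ (n + 1) * s) - u s|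
        ≤ |u (α * (α ^ n * s)) - u (α ^ n * s)| + |u (α ^ n * s) - u s| := by
          rw [pow_succ', mul_assoc]; exact abs_sub_le _ _ _
      _ ≤ δ + n * δ := add_le_add (hstep _ hbn) ih
      _ = (n + 1 : ℕ) * δ := by push_cast; ring

lemma abs_le_add_mul_log_div (hα : 1 < α) (hb : 0 < b)
    (hstep : ∀ r, b ≤ r → |u (α * r) - u r| ≤ ε * log α)
    (hwindow : ∀ s ∈ Icc b (α * b), |u s| ≤ K) {r : ℝ} (hr : b ≤ r) :
    |u r| ≤ K + ε * log (r / b) := by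
  have hlogα : 0 < log α := log_pos hα
  have hε : 0 ≤ ε := nonneg_of_mul_nonneg_left ((abs_nonneg _).trans (hstep b le_rfl)) hlogα
  obtain ⟨n, hn_le, hn_lt⟩ := exists_nat_pow_near ((one_le_div hb).2 hr) hα
  have hpow : 0 < α ^ n := pow_pos (by linarith) n
  set s := r / α ^ n
  have hrs : α ^ n * s = r := mul_div_cancel₀ r hpow.ne'
  have hs : s ∈ Icc b (α * b) := by
    constructor
    · rwa [le_div_iff₀ hpow, mul_comm, ← le_div_iff₀ hb]
    · have := (div_lt_iff₀ hb).1 hn_lt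
      rw [div_le_iff₀ hpow]
      rw [pow_succ] at this
      linarith
  have hlog_pow : n * log α ≤ log (r / b) := by
    rw [← log_pow]; exact log_le_log hpow hn_le
  calc |u r| ≤ |u s| + |u (α ^ n * s) - u s| := by
        rw [hrs]; linarith [abs_sub_abs_le_abs_sub (u r) (u s)]
    _ ≤ K + n * (ε * log α) :=
        add_le_add (hwindow s hs) (abs_comp_pow_mul_sub_le hα.le hb.le hstep n hs.1)
    _ ≤ K + ε * log (r / b) := by nlinarith

end MultiplicativeIncrements

lemma isLittleO_log_of_abs_comp_mul_sub_le {u : ℝ → ℝ}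
    (h : ∀ ε > 0, ∃ α > 1, (∀ᶠ r in atTop, |u (α * r) - u r| ≤ ε * log α) ∧
      ∀ᶠ b in atTop, ∃ K, ∀ s ∈ Icc b (α * b), |u s| ≤ K) :
    u =o[atTop] log := by
  refine isLittleO_iff.2 fun c hc ↦ ?_
  obtain ⟨α, hα, hstep, hwindow⟩ := h (c / 2) (half_pos hc)
  obtain ⟨b, hstep_b, hb, K, hwindow_b⟩ :=
    ((eventually_forall_ge_atTop.2 hstep).and ((eventually_gt_atTop 0).and hwindow)).exists
  filter_upwards [eventually_ge_atTop b, eventually_ge_atTop 1,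
    (tendsto_log_atTop.const_mul_atTop (half_pos hc)).eventually_ge_atTop (K - c / 2 * log b)]
    with r hbr hr hlog_r
  have hu := abs_le_add_mul_log_div hα hb hstep_b hwindow_b hbr
  rw [log_div (by linarith) hb.ne'] at hu
  rw [Real.norm_eq_abs, Real.norm_eq_abs, abs_of_nonneg (log_nonneg hr)]
  linarith

namespace RegGrowthLimit

variable {f : ℝ → ℝ} {χ : ℝ}

lemma exists_abs_comp_mul_sub_le (h : RegGrowthLimit f χ) {ε : ℝ} (hε : 0 < ε) :
    ∃ α > 1, ∀ᶠ r in atTop,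
      |(log (f (α * r)) - χ * log (α * r)) - (log (f r) - χ * log r)| ≤ ε * log α := by
  obtain ⟨α, r₀, hα, hr₀, H⟩ := h.1 ε hε
  refine ⟨α, hα, ?_⟩
  filter_upwards [eventually_ge_atTop r₀] with r hr
  have hlog_α : 0 < log α := log_pos hα
  have hquot := H α r le_rfl hr
  rw [log_mul (by linarith) (by linarith)]
  calc |(log (f (α * r)) - χ * (log α + log r)) - (log (f r) - χ * log r)|
      = log α * |(log (f (α * r)) - log (f r)) / log α - χ| := by
        rw [← abs_of_pos hlog_α, ← abs_mul, abs_of_pos hlog_α]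
        congr 1
        field_simp
        ring
    _ ≤ ε * log α := by nlinarith

lemma eventually_abs_le_on_Icc (h : RegGrowthLimit f χ) {α : ℝ} (hα : 0 < α) :
    ∀ᶠ b in atTop, ∃ K, ∀ s ∈ Icc b (α * b), |log (f s) - χ * log s| ≤ K := by
  obtain ⟨⟨m, r₁, Hm⟩, M, r₂, HM⟩ := h.2 α hα
  filter_upwards [eventually_ge_atTop r₁, eventually_ge_atTop r₂, eventually_ge_atTop 1]
    with b hr₁ hr₂ hb
  refine ⟨|log (f b)| + |m| + |M| + |χ| * log (α * b), fun s ⟨hbs, hsα⟩ ↦ ?_⟩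
  have hb₀ : 0 < b := by linarith
  have hratio₁ : 1 ≤ s / b := (one_le_div hb₀).2 hbs
  have hratio₂ : s / b ≤ α := (div_le_iff₀ hb₀).2 hsα
  have hlo := Hm b hr₁ (s / b) hratio₁ hratio₂
  have hhi := HM b hr₂ (s / b) hratio₁ hratio₂
  rw [div_mul_cancel₀ s hb₀.ne'] at hlo hhi
  have hlog_s : |χ * log s| ≤ |χ| * log (α * b) := by
    rw [abs_mul, abs_of_nonneg (log_nonneg (by linarith))]
    exact mul_le_mul_of_nonneg_left (log_le_log (by linarith) hsα) (abs_nonneg χ)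
  rw [abs_le] at hlog_s ⊢
  constructor <;> linarith [neg_abs_le (log (f b)), le_abs_self (log (f b)), neg_abs_le m,
    le_abs_self M, abs_nonneg m, abs_nonneg M]

end RegGrowthLimit

theorem regular_growth_implies_growth_general (f : ℝ → ℝ) (χ : ℝ)
    (hreg : RegGrowthLimit f χ) :
    Filter.Tendsto (fun r : ℝ => Real.log (f r) / Real.log r)
      Filter.atTop (nhds χ) := by
  have hdev : (fun r ↦ log (f r) - χ * log r) =o[atTop] log :=
    isLittleO_log_of_abs_comp_mul_sub_le fun ε hε ↦ by
      obtain ⟨α, hα, hstep⟩ := hreg.exists_abs_comp_mul_sub_le hε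
      exact ⟨α, hα, hstep, hreg.eventually_abs_le_on_Icc (by linarith)⟩
  have hlim := (tendsto_const_nhds (x := χ)).add hdev.tendsto_div_nhds_zero
  rw [add_zero] at hlim
  refine hlim.congr' ?_
  filter_upwards [eventually_gt_atTop 1] with r hr
  have := (log_pos hr).ne'
  field_simp
  ring

/-- a function with regular growth exponent `χ ≥ 0` has growth
exponent `χ`, i.e. `log f(r) / log r → χ` as `r → ∞`. -/
theorem regular_growth_implies_growth (f : ℝ → ℝ) (χ : ℝ) (hχ : 0 ≤ χ)
    (hpos : ∀ r : ℝ, 1 ≤ r → 0 < f r)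
    (hreg : RegGrowthLimit f χ) :
    Filter.Tendsto (fun r : ℝ => Real.log (f r) / Real.log r)
      Filter.atTop (nhds χ) :=
  regular_growth_implies_growth_general f χ hreg
end

section
/- Let g be a norm on ℝ^d, B = {u : g(u) ≤ 1} its unit ball, θ a unit vector, and y the point of ∂B in direction θ. Assume there exist c₅, c₆, ε₀ > 0 such that for u in the tangent hyperplane H₁ to B at y (translate of a supporting hyperplane) with |u − y| ≤ ε₀: 1 + c₆|u − y|² ≤ g(u) ≤ 1 + c₅|u − y|². Then there exist a neighborhood U of y in H₁ and a constant C such that for all u, v ∈ U: |g(v) − g(u)| ≤ C·|v − u|·(|u − y| + |v − y|). -/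
/-!
On the tangent hyperplane near `y` the norm satisfies `1 ≤ g ≤ 1 + c₅ ‖· - y‖²`. Given `u`, `v`
there, prolong the segment from `u` through `v` by `‖v - y‖` to a point `w`, which stays within
`2 ‖v - y‖` of `y`. Since `v` divides `[u, w]` in the ratio `λ = ‖v - u‖ / (‖v - u‖ + ‖v - y‖)`,
convexity of `g` gives `g v - g u ≤ λ (g w - g u) ≤ λ · 4 c₅ ‖v - y‖² ≤ 4 c₅ ‖v - u‖ ‖v - y‖`;
exchanging `u` and `v` bounds `|g v - g u|`.
-/

open Set

section
variable {E : Type*} [NormedAddCommGroup E] [NormedSpace ℝ E] {f : E → ℝ}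

theorem ConvexOn.apply_lineMap_sub_le (hf : ConvexOn ℝ univ f) (u w : E) {c : ℝ}
    (hc₀ : 0 ≤ c) (hc₁ : c ≤ 1) :
    f (AffineMap.lineMap u w c) - f u ≤ c * (f w - f u) := by
  have h := hf.2 (mem_univ u) (mem_univ w) (sub_nonneg.2 hc₁) hc₀ (sub_add_cancel 1 c)
  rw [← AffineMap.lineMap_apply_module, smul_eq_mul, smul_eq_mul] at h
  linarith

theorem ConvexOn.sub_le_of_le_add_sq_on_line (hf : ConvexOn ℝ univ f) {y u v : E} {m K : ℝ}
    (hK : 0 ≤ K) (hu : m ≤ f u)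
    (hline : ∀ x ∈ line[ℝ, u, v], ‖x - y‖ ≤ 2 * ‖v - y‖ → f x ≤ m + K * ‖x - y‖ ^ 2) :
    f v - f u ≤ 4 * K * ‖v - u‖ * ‖v - y‖ := by
  rcases eq_or_ne v u with rfl | hvu
  · simp
  have ht : 0 < ‖v - u‖ := norm_pos_iff.2 (sub_ne_zero.2 hvu)
  have hb : 0 ≤ ‖v - y‖ := norm_nonneg _
  set t := ‖v - u‖
  set b := ‖v - y‖
  set w := AffineMap.lineMap u v (1 + b / t)
  have hwv : w - y = (v - y) + (b / t) • (v - u) := by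
    simp only [w, AffineMap.lineMap_apply_module']
    module
  have hwy : ‖w - y‖ ≤ 2 * b := by
    calc ‖w - y‖ ≤ b + ‖(b / t) • (v - u)‖ := hwv ▸ norm_add_le _ _
      _ = 2 * b := by
        rw [norm_smul, Real.norm_of_nonneg (by positivity), div_mul_cancel₀ _ ht.ne']; ring
  have hfw : f w - f u ≤ 4 * K * b ^ 2 := by
    have := hline w (AffineMap.lineMap_mem_affineSpan_pair _ _ _) hwy
    nlinarith [pow_le_pow_left₀ (norm_nonneg _) hwy 2]
  have htb : 0 < t + b := by positivity
  have hvw : AffineMap.lineMap u w (t / (t + b)) = v := by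
    simp only [w, AffineMap.lineMap_apply_module']
    rw [← sub_eq_zero]
    match_scalars <;> field_simp <;> ring
  have hbt : t / (t + b) * b ≤ t := by
    rw [div_mul_eq_mul_div, div_le_iff₀ htb]
    nlinarith
  calc f v - f u = f (AffineMap.lineMap u w (t / (t + b))) - f u := by rw [hvw]
    _ ≤ t / (t + b) * (f w - f u) :=
      hf.apply_lineMap_sub_le u w (by positivity) (div_le_one_of_le₀ (by linarith) htb.le)
    _ ≤ t / (t + b) * (4 * K * b ^ 2) := by gcongr
    _ = 4 * K * b * (t / (t + b) * b) := by ring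
    _ ≤ 4 * K * b * t := by gcongr
    _ = 4 * K * t * b := by ring

theorem ConvexOn.abs_sub_le_of_le_add_sq_on_line (hf : ConvexOn ℝ univ f) {y u v : E} {m K : ℝ}
    (hK : 0 ≤ K) (hu : m ≤ f u) (hv : m ≤ f v)
    (hline : ∀ x ∈ line[ℝ, u, v], ‖x - y‖ ≤ 2 * (‖u - y‖ + ‖v - y‖) →
      f x ≤ m + K * ‖x - y‖ ^ 2) :
    |f v - f u| ≤ 4 * K * ‖v - u‖ * (‖u - y‖ + ‖v - y‖) := by
  have hua : 0 ≤ ‖u - y‖ := norm_nonneg _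
  have hvb : 0 ≤ ‖v - y‖ := norm_nonneg _
  have hvu := hf.sub_le_of_le_add_sq_on_line hK hu fun x hx hxr ↦ hline x hx (by linarith)
  have huv := hf.sub_le_of_le_add_sq_on_line hK hv fun x hx hxr ↦
    hline x (by rwa [pair_comm]) (by linarith)
  rw [norm_sub_rev u v] at huv
  rw [abs_sub_le_iff]
  constructor
  · calc f v - f u ≤ 4 * K * ‖v - u‖ * ‖v - y‖ := hvu
      _ ≤ 4 * K * ‖v - u‖ * (‖u - y‖ + ‖v - y‖) := by gcongr; linarith
  · calc f u - f v ≤ 4 * K * ‖v - u‖ * ‖u - y‖ := huv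
      _ ≤ 4 * K * ‖v - u‖ * (‖u - y‖ + ‖v - y‖) := by gcongr; linarith

end

theorem LinearMap.map_sub_eq_zero_of_mem_affineSpan_pair {k E F : Type*} [Ring k]
    [AddCommGroup E] [Module k E] [AddCommGroup F] [Module k F] (φ : E →ₗ[k] F) {x y u v : E}
    (hu : φ (u - y) = 0) (hv : φ (v - y) = 0) (hx : x ∈ line[k, u, v]) : φ (x - y) = 0 := by
  obtain ⟨r, rfl⟩ := mem_affineSpan_pair_iff_exists_lineMap_eq.1 hx
  rw [AffineMap.lineMap_apply_module', add_sub_assoc, ← sub_sub_sub_cancel_right v u y, map_add,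
    map_smul, map_sub, hu, hv, sub_zero, smul_zero, zero_add]

theorem gsmooth_on_tangent_hyperplane_general {d : ℕ}
    (g : EuclideanSpace ℝ (Fin d) → ℝ)
    (hgadd : ∀ u v, g (u + v) ≤ g u + g v)
    (hgsmul : ∀ (t : ℝ) u, g (t • u) = |t| * g u)
    (y : EuclideanSpace ℝ (Fin d))
    (φ : EuclideanSpace ℝ (Fin d) →ₗ[ℝ] ℝ)
    (c₅ c₆ ε₀ : ℝ) (hc₅ : 0 < c₅) (hc₆ : 0 < c₆) (hε₀ : 0 < ε₀)
    (hcurv : ∀ u, φ (u - y) = 0 → ‖u - y‖ ≤ ε₀ →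
      1 + c₆ * ‖u - y‖ ^ 2 ≤ g u ∧ g u ≤ 1 + c₅ * ‖u - y‖ ^ 2) :
    ∃ ρ : ℝ, 0 < ρ ∧ ∃ C : ℝ, ∀ u v,
      φ (u - y) = 0 → φ (v - y) = 0 → ‖u - y‖ < ρ → ‖v - y‖ < ρ →
      |g v - g u| ≤ C * ‖v - u‖ * (‖u - y‖ + ‖v - y‖) := by
  refine ⟨ε₀ / 4, by positivity, 4 * c₅, fun u v hu hv hur hvr ↦ ?_⟩
  have hconvex : ConvexOn ℝ univ g :=
    (Seminorm.of g hgadd fun t x ↦ by rw [hgsmul, Real.norm_eq_abs]).convexOn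
  have hone_le : ∀ x, φ (x - y) = 0 → ‖x - y‖ < ε₀ / 4 → 1 ≤ g x := fun x hx hxr ↦
    (le_add_of_nonneg_right (by positivity)).trans
      (hcurv x hx (by linarith [norm_nonneg (x - y)])).1
  refine hconvex.abs_sub_le_of_le_add_sq_on_line hc₅.le (hone_le u hu hur) (hone_le v hv hvr)
    fun x hx hxr ↦ ?_
  exact (hcurv x (φ.map_sub_eq_zero_of_mem_affineSpan_pair hu hv hx) (by linarith)).2

/-- inequality (4.3) of Lemma 4.1: under two-sided quadratic
curvature of the norm `g` at `y = y_θ` in the tangent hyperplane, `g` satisfies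
the Lipschitz-type bound `|g(v) - g(u)| ≤ C |v - u| (|u - y| + |v - y|)`
on a neighborhood of `y` in the tangent hyperplane. -/
theorem gsmooth_on_tangent_hyperplane {d : ℕ}
    (g : EuclideanSpace ℝ (Fin d) → ℝ)
    (hg0 : ∀ u, 0 ≤ g u)
    (hgadd : ∀ u v, g (u + v) ≤ g u + g v)
    (hgsmul : ∀ (t : ℝ) u, g (t • u) = |t| * g u)
    (hgdef : ∀ u, g u = 0 → u = 0)
    (θ : EuclideanSpace ℝ (Fin d)) (hθ : ‖θ‖ = 1) (hgθ : 0 < g θ)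
    (y : EuclideanSpace ℝ (Fin d)) (hydef : y = (g θ)⁻¹ • θ)
    (φ : EuclideanSpace ℝ (Fin d) →ₗ[ℝ] ℝ) (hφ : φ ≠ 0)
    (hsupp : ∀ u, g u ≤ 1 → φ u ≤ φ y)
    (c₅ c₆ ε₀ : ℝ) (hc₅ : 0 < c₅) (hc₆ : 0 < c₆) (hε₀ : 0 < ε₀)
    (hcurv : ∀ u, φ (u - y) = 0 → ‖u - y‖ ≤ ε₀ →
      1 + c₆ * ‖u - y‖ ^ 2 ≤ g u ∧ g u ≤ 1 + c₅ * ‖u - y‖ ^ 2) :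
    ∃ ρ : ℝ, 0 < ρ ∧ ∃ C : ℝ, ∀ u v,
      φ (u - y) = 0 → φ (v - y) = 0 → ‖u - y‖ < ρ → ‖v - y‖ < ρ →
      |g v - g u| ≤ C * ‖v - u‖ * (‖u - y‖ + ‖v - y‖) :=
  gsmooth_on_tangent_hyperplane_general g hgadd hgsmul y φ c₅ c₆ ε₀ hc₅ hc₆ hε₀ hcurv
end

section
/- Let B ⊂ ℝ^d be a compact convex body with 0 in its interior, y ∈ ∂B, H the tangent hyperplane at y (a supporting hyperplane translated to pass through y), and φ a unit vector pointing from the H-side of B into the halfspace containing B's interior, making an angle at least β > 0 with H. For u ∈ H near y, let f(u) = |u − p(u)| where p(u) ∈ ∂B is the intersection with ∂B of the line through u in direction −φ. Assume f(u) ≤ c₅|u − y|² for all u ∈ H with |u − y| ≤ ε₀. Then there is a neighborhood U of y in H and a constant C = C(β, c₅) such that |f(v) − f(u)| ≤ C|v − u|(|u − y| + |v − y|) for all u, v ∈ U. -/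
/-!
For `λ ≥ 1` the points `p u + λ (p v - p u)` avoid the interior of the convex body `B`; written
as `w - s φ` with `w ∈ H`, both the foot `w` and the height `s` depend affinely on `λ`.
A point `w - s φ` below `H` near `y` that is not interior is either within `K |w - y|²` of `H` or
at height at least a fixed `κ > 0`: for intermediate heights it lies in the cone spanned by a
ball around `0 ∈ int B` and the boundary point below a shifted foot `w'`, which is within
`c₅ |w' - y|²` of `H`. An affine height cannot jump across this gap, so following the ray until
its foot has moved by `|u - y| + |v - y|` gives `f v - f u ≤ 4K |v - u| (|u - y| + |v - y|)`.
-/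

open Metric Set RealInnerProductSpace

theorem add_mul_le_of_gap {a Δ μ₁ A κ : ℝ} (hΔ : 0 < Δ) (hμ₁ : 0 ≤ μ₁) (ha : a < κ) (hA : A < κ)
    (h : ∀ μ ∈ Icc 0 μ₁, a + μ * Δ < κ → a + μ * Δ ≤ A) : a + μ₁ * Δ ≤ A := by
  have haA : a ≤ A := by simpa using h 0 ⟨le_rfl, hμ₁⟩ (by simpa using ha)
  by_contra! hgt
  rcases lt_or_ge (a + μ₁ * Δ) κ with hlt | hge
  · exact (h μ₁ ⟨hμ₁, le_rfl⟩ hlt).not_gt hgt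
  · obtain ⟨m, hAm, hmκ⟩ := exists_between hA
    have hμ : a + (m - a) / Δ * Δ = m := by field_simp; ring
    have hmem : (m - a) / Δ ∈ Icc 0 μ₁ :=
      ⟨div_nonneg (by linarith) hΔ.le, (div_le_iff₀ hΔ).2 (by linarith)⟩
    have := h _ hmem (by rw [hμ]; exact hmκ)
    linarith

theorem exists_pos_le_and_mul_sq_lt {ε κ : ℝ} (hε : 0 < ε) (hκ : 0 < κ) (C : ℝ) :
    ∃ ρ > 0, ρ ≤ ε ∧ C * ρ ^ 2 < κ := by
  have hsmall : ∀ᶠ ρ in nhdsWithin 0 (Ioi 0), ρ ≤ ε ∧ C * ρ ^ 2 < κ :=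
    (Filter.eventually_of_mem (Ioo_mem_nhdsGT hε) fun _ h => h.2.le).and <| nhdsWithin_le_nhds <|
      ((continuous_const.mul (continuous_pow 2)).tendsto' 0 0 (by simp)).eventually
        (gt_mem_nhds hκ)
  obtain ⟨ρ, hρ, hρ0⟩ := (hsmall.and self_mem_nhdsWithin).exists
  exact ⟨ρ, hρ0, hρ⟩

section TopologicalVectorSpace

variable {V : Type*} [AddCommGroup V] [Module ℝ V] [TopologicalSpace V]
  [IsTopologicalAddGroup V] [ContinuousSMul ℝ V]

theorem Convex.add_smul_sub_notMem_interior {B : Set V} (hB : Convex ℝ B) {a b : V}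
    (ha : a ∈ closure B) (hb : b ∉ interior B) {t : ℝ} (ht : 1 ≤ t) :
    a + t • (b - a) ∉ interior B := by
  intro hq
  have ht0 : 0 < t := by linarith
  refine hb ?_
  convert hB.combo_interior_closure_mem_interior hq ha (inv_pos.2 ht0)
    (sub_nonneg.2 (inv_le_one_of_one_le₀ ht)) (add_sub_cancel _ _) using 1
  rw [smul_add, smul_smul, inv_mul_cancel₀ ht0.ne']
  module

end TopologicalVectorSpace

section NormedSpace

variable {V : Type*} [NormedAddCommGroup V] [NormedSpace ℝ V]

theorem Convex.sub_smul_mem_interior_of_shifted_mem_closure {B : Set V} (hB : Convex ℝ B)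
    {r : ℝ} (hball : ball (0 : V) r ⊆ interior B) {φ : V} (hφ : ‖φ‖ = 1) {w : V} {t₀ θ t : ℝ}
    (hθ : 0 < θ) (hθ1 : θ < 1) (ht : 0 ≤ t) (htr : t < θ * r)
    (hP : w + (θ / (1 - θ)) • (w - t₀ • φ) - t • φ ∈ closure B) :
    w - (θ * t₀) • φ ∈ interior B := by
  -- `w - θ t₀ φ` lies on the segment from the point in `hP` to the point `((1 - θ) t / θ) φ` of the ball
  have h1θ : 0 < 1 - θ := by linarith
  have hx : ((1 - θ) * t / θ) • φ ∈ interior B := by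
    refine hball (mem_ball_zero_iff.2 ?_)
    rw [norm_smul, hφ, mul_one, Real.norm_eq_abs, abs_of_nonneg (by positivity), div_lt_iff₀ hθ]
    nlinarith
  convert hB.combo_interior_closure_mem_interior hx hP hθ h1θ.le (by ring) using 1
  match_scalars <;> field_simp <;> ring

theorem norm_shift_sub_le {w y π : V} {θ : ℝ} (hθ : 0 ≤ θ) (hθ2 : θ ≤ 1 / 2) :
    ‖w + (θ / (1 - θ)) • (w - π) - y‖ ≤ 2 * ‖w - y‖ + 2 * θ * ‖y - π‖ := by
  have hc : 0 ≤ θ / (1 - θ) := div_nonneg hθ (by linarith)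
  have hc' : θ / (1 - θ) ≤ 2 * θ := by rw [div_le_iff₀ (by linarith)]; nlinarith
  calc ‖w + (θ / (1 - θ)) • (w - π) - y‖
        = ‖(w - y) + (θ / (1 - θ)) • ((w - y) + (y - π))‖ := by congr 1; module
    _ ≤ ‖w - y‖ + θ / (1 - θ) * (‖w - y‖ + ‖y - π‖) := by
        refine (norm_add_le _ _).trans (add_le_add le_rfl ?_)
        rw [norm_smul, Real.norm_of_nonneg hc]
        exact mul_le_mul_of_nonneg_left (norm_add_le _ _) hc
    _ ≤ ‖w - y‖ + 2 * θ * (‖w - y‖ + ‖y - π‖) := by gcongr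
    _ ≤ 2 * ‖w - y‖ + 2 * θ * ‖y - π‖ := by nlinarith [norm_nonneg (w - y)]

end NormedSpace

section InnerProductSpace

variable {E : Type*} [NormedAddCommGroup E] [InnerProductSpace ℝ E]

theorem inner_pos_of_zero_mem_interior {B : Set E} (h0 : (0 : E) ∈ interior B) {y n : E}
    (hn : n ≠ 0) (hsupp : ∀ u ∈ B, ⟪u, n⟫ ≤ ⟪y, n⟫) : 0 < ⟪y, n⟫ := by
  have hlim : Filter.Tendsto (fun t : ℝ => t • n) (nhdsWithin 0 (Ioi 0)) (nhds 0) :=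
    ((continuous_id.smul continuous_const).tendsto' 0 0 (zero_smul ℝ n)).mono_left
      nhdsWithin_le_nhds
  obtain ⟨t, htB, ht⟩ :=
    ((hlim.eventually (mem_interior_iff_mem_nhds.1 h0)).and self_mem_nhdsWithin).exists
  have := hsupp _ htB
  rw [real_inner_smul_left, real_inner_self_eq_norm_sq] at this
  have := mul_pos ht (pow_pos (norm_pos_iff.2 hn) 2)
  linarith

theorem exists_height_dichotomy {B : Set E} (hB : Convex ℝ B) (h0 : (0 : E) ∈ interior B)
    {y n φ : E} (hφ : ‖φ‖ = 1) {t₀ : ℝ} (ht₀ : 0 < t₀) (hπ : ⟪t₀ • φ - y, n⟫ = 0)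
    {c₅ ε₀ : ℝ} (hc₅ : 0 ≤ c₅) (hε₀ : 0 < ε₀)
    (hlow : ∀ w, ⟪w - y, n⟫ = 0 → ‖w - y‖ ≤ ε₀ →
      ∃ t, 0 ≤ t ∧ t ≤ c₅ * ‖w - y‖ ^ 2 ∧ w - t • φ ∈ closure B) :
    ∃ ε₁ > 0, ε₁ ≤ ε₀ ∧ ∃ κ > 0, ∃ K ≥ 0, ∀ w, ⟪w - y, n⟫ = 0 → ‖w - y‖ ≤ ε₁ →
      ∀ s, 0 ≤ s → s < κ → w - s • φ ∉ interior B → s ≤ K * ‖w - y‖ ^ 2 := by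
  obtain ⟨r, hr, hball⟩ := Metric.isOpen_iff.1 isOpen_interior 0 h0
  set D := ‖y - t₀ • φ‖
  -- with `θ = s / t₀` and the shifted foot `w'` below: `K` keeps the `‖w - y‖²` part of the
  -- height of the boundary point below `w'` under `θ r / 2`, and `κ` keeps `θ ≤ 1 / 2`,
  -- `‖w' - y‖ ≤ ε₀` and the `θ² D²` part under `θ r / 2`
  refine ⟨ε₀ / 4, by positivity, by linarith,
    t₀ * min (1 / 2) (min (ε₀ / (4 * D + 1)) (r / (16 * c₅ * D ^ 2 + 1))), by positivity,
    16 * c₅ * t₀ / r, by positivity, fun w hw hwε s hs hsκ hq => ?_⟩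
  by_contra! hKs
  set a := ‖w - y‖
  set θ := s / t₀
  have hs_eq : s = θ * t₀ := (div_mul_cancel₀ s ht₀.ne').symm
  have hθκ : θ < min (1 / 2) (min (ε₀ / (4 * D + 1)) (r / (16 * c₅ * D ^ 2 + 1))) :=
    lt_of_mul_lt_mul_left (by rwa [mul_comm, ← hs_eq]) ht₀.le
  have hθK : 16 * c₅ * a ^ 2 < θ * r := by
    rw [div_mul_eq_mul_div, div_lt_iff₀ hr, hs_eq] at hKs
    nlinarith
  rw [lt_min_iff, lt_min_iff] at hθκ
  obtain ⟨hθ2, hθε, hθr⟩ := hθκ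
  have hθ : 0 < θ := by
    have : 0 ≤ 16 * c₅ * a ^ 2 := by positivity
    nlinarith
  have hθε' : 4 * θ * D ≤ ε₀ := by
    rw [lt_div_iff₀ (by positivity)] at hθε; nlinarith [norm_nonneg (y - t₀ • φ)]
  have hθr' : 16 * c₅ * D ^ 2 * θ ≤ r := by
    rw [lt_div_iff₀ (by positivity)] at hθr; nlinarith
  set w' := w + (θ / (1 - θ)) • (w - t₀ • φ)
  have hw' : ⟪w' - y, n⟫ = 0 := by
    have : w' - y = (w - y) + (θ / (1 - θ)) • ((w - y) - (t₀ • φ - y)) := by simp only [w']; module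
    rw [this, inner_add_left, real_inner_smul_left, inner_sub_left (w - y), hw, hπ]; ring
  have hw'y : ‖w' - y‖ ≤ 2 * a + 2 * θ * D := norm_shift_sub_le hθ.le hθ2.le
  obtain ⟨t, ht, htq, hP⟩ := hlow w' hw' (by linarith)
  refine hq (hs_eq ▸
    hB.sub_smul_mem_interior_of_shifted_mem_closure hball hφ hθ (by linarith) ht ?_ hP)
  calc t ≤ c₅ * (2 * a + 2 * θ * D) ^ 2 := htq.trans (by gcongr)
    _ ≤ 8 * c₅ * a ^ 2 + 8 * c₅ * θ ^ 2 * D ^ 2 := by nlinarith [sq_nonneg (a - θ * D)]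
    _ < θ * r := by nlinarith

theorem sub_le_of_height_dichotomy {B : Set E} (hB : Convex ℝ B) {y n φ : E} {ε₁ κ K ρ : ℝ}
    (hK : 0 ≤ K)
    (hdich : ∀ w, ⟪w - y, n⟫ = 0 → ‖w - y‖ ≤ ε₁ →
      ∀ s, 0 ≤ s → s < κ → w - s • φ ∉ interior B → s ≤ K * ‖w - y‖ ^ 2)
    (hρε : 4 * ρ ≤ ε₁) (hρκ : 16 * K * ρ ^ 2 < κ) {f : E → ℝ} {u v : E}
    (hu : ⟪u - y, n⟫ = 0) (hv : ⟪v - y, n⟫ = 0) (huρ : ‖u - y‖ < ρ) (hvρ : ‖v - y‖ < ρ)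
    (hfu : u - f u • φ ∈ closure B) (hfv : v - f v • φ ∉ interior B) (hfv0 : 0 ≤ f v)
    (hfvκ : f v < κ) :
    f v - f u ≤ 4 * K * ‖v - u‖ * (‖u - y‖ + ‖v - y‖) := by
  set S := ‖u - y‖ + ‖v - y‖
  rcases le_or_gt (f v - f u) 0 with hΔ | hΔ
  · exact hΔ.trans (by positivity)
  have huv : u ≠ v := by rintro rfl; simp at hΔ
  have hδ : 0 < ‖v - u‖ := norm_pos_iff.2 (sub_ne_zero.2 huv.symm)
  have hS : 0 < S := by
    by_contra! hS
    have hu' : u = y := sub_eq_zero.1 (norm_le_zero_iff.1 (by linarith [norm_nonneg (v - y)]))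
    have hv' : v = y := sub_eq_zero.1 (norm_le_zero_iff.1 (by linarith [norm_nonneg (u - y)]))
    exact huv (hu'.trans hv'.symm)
  -- follow the ray from `p u` through `p v` until its foot has moved by `S` along `H`
  have hray : f v + S / ‖v - u‖ * (f v - f u) ≤ K * (2 * S) ^ 2 := by
    refine add_mul_le_of_gap hΔ (by positivity) hfvκ ?_ fun μ hμ hlt => ?_
    · calc K * (2 * S) ^ 2 ≤ K * (4 * ρ) ^ 2 := by gcongr K * ?_ ^ 2; linarith
        _ < κ := by linarith
    set w := v + μ • (v - u)
    have hw : ⟪w - y, n⟫ = 0 := by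
      have : w - y = (v - y) + μ • ((v - y) - (u - y)) := by simp only [w]; module
      rw [this, inner_add_left, real_inner_smul_left, inner_sub_left (v - y), hu, hv]; ring
    have hwy : ‖w - y‖ ≤ 2 * S := by
      have hμδ : μ * ‖v - u‖ ≤ S := (le_div_iff₀ hδ).1 hμ.2
      calc ‖w - y‖ = ‖(v - y) + μ • (v - u)‖ := by congr 1; simp only [w]; abel
        _ ≤ ‖v - y‖ + μ * ‖v - u‖ :=
          (norm_add_le _ _).trans_eq (by rw [norm_smul, Real.norm_of_nonneg hμ.1])
        _ ≤ 2 * S := by linarith [norm_nonneg (u - y)]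
    have hq : w - (f v + μ * (f v - f u)) • φ ∉ interior B := by
      have : w - (f v + μ * (f v - f u)) • φ
          = u - f u • φ + (1 + μ) • (v - f v • φ - (u - f u • φ)) := by simp only [w]; module
      rw [this]
      exact hB.add_smul_sub_notMem_interior hfu hfv (by linarith [hμ.1])
    calc f v + μ * (f v - f u) ≤ K * ‖w - y‖ ^ 2 :=
          hdich w hw (by linarith) _ (by nlinarith [hμ.1]) hlt hq
      _ ≤ K * (2 * S) ^ 2 := by gcongr
  have hslope : S / ‖v - u‖ * (f v - f u) ≤ 4 * K * S ^ 2 := by linarith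
  rw [div_mul_eq_mul_div, div_le_iff₀ hδ] at hslope
  exact le_of_mul_le_mul_left (by linarith) hS

end InnerProductSpace

theorem height_function_smooth_general {d : ℕ}
    (B : Set (EuclideanSpace ℝ (Fin d)))
    (hconv : Convex ℝ B)
    (h0 : (0 : EuclideanSpace ℝ (Fin d)) ∈ interior B)
    (y : EuclideanSpace ℝ (Fin d))
    (n : EuclideanSpace ℝ (Fin d))
    (hsupp : ∀ u ∈ B, (inner ℝ u n : ℝ) ≤ (inner ℝ y n : ℝ))
    (φv : EuclideanSpace ℝ (Fin d)) (hφv : ‖φv‖ = 1)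
    (β : ℝ) (hβ : 0 < β) (hβ2 : β < Real.pi / 2)
    (hangle : Real.sin β ≤ (inner ℝ φv n : ℝ))
    (c₅ ε₀ : ℝ) (hc₅ : 0 < c₅) (hε₀ : 0 < ε₀)
    (p : EuclideanSpace ℝ (Fin d) → EuclideanSpace ℝ (Fin d))
    (f : EuclideanSpace ℝ (Fin d) → ℝ)
    (hp : ∀ u, (inner ℝ (u - y) n : ℝ) = 0 → ‖u - y‖ ≤ ε₀ →
      p u ∈ frontier B ∧ ∃ t : ℝ, 0 ≤ t ∧ p u = u - t • φv)
    (hf : ∀ u, f u = ‖u - p u‖)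
    (hquad : ∀ u, (inner ℝ (u - y) n : ℝ) = 0 → ‖u - y‖ ≤ ε₀ →
      f u ≤ c₅ * ‖u - y‖ ^ 2) :
    ∃ ρ : ℝ, 0 < ρ ∧ ∃ C : ℝ, ∀ u v,
      (inner ℝ (u - y) n : ℝ) = 0 → (inner ℝ (v - y) n : ℝ) = 0 →
      ‖u - y‖ < ρ → ‖v - y‖ < ρ →
      |f v - f u| ≤ C * ‖v - u‖ * (‖u - y‖ + ‖v - y‖) := by
  have hφn : 0 < ⟪φv, n⟫ :=
    (Real.sin_pos_of_pos_of_lt_pi hβ (by linarith [Real.pi_pos])).trans_le hangle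
  have hyn : 0 < ⟪y, n⟫ :=
    inner_pos_of_zero_mem_interior h0 (by rintro rfl; simp at hφn) hsupp
  have hfoot : ∀ w, ⟪w - y, n⟫ = 0 → ‖w - y‖ ≤ ε₀ →
      p w ∈ frontier B ∧ p w = w - f w • φv ∧ 0 ≤ f w := by
    intro w hw hwε
    obtain ⟨hfr, t, ht, hpt⟩ := hp w hw hwε
    have hft : f w = t := by
      rw [hf, hpt, sub_sub_cancel, norm_smul, hφv, mul_one, Real.norm_of_nonneg ht]
    exact ⟨hfr, hft ▸ hpt, hft ▸ ht⟩
  obtain ⟨ε₁, hε₁, hε₁ε₀, κ, hκ, K, hK, hdich⟩ :=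
    exists_height_dichotomy hconv h0 hφv (t₀ := ⟪y, n⟫ / ⟪φv, n⟫) (by positivity)
      (by rw [inner_sub_left, real_inner_smul_left, div_mul_cancel₀ _ hφn.ne', sub_self])
      hc₅.le hε₀ fun w hw hwε => ⟨f w, (hfoot w hw hwε).2.2, hquad w hw hwε,
        (hfoot w hw hwε).2.1 ▸ frontier_subset_closure (hfoot w hw hwε).1⟩
  obtain ⟨ρ, hρ, hρε₁, hρκ⟩ := exists_pos_le_and_mul_sq_lt (ε := ε₁ / 4) (by positivity) hκ
    (c₅ + 16 * K)
  have hbound : ∀ u v, ⟪u - y, n⟫ = 0 → ⟪v - y, n⟫ = 0 → ‖u - y‖ < ρ → ‖v - y‖ < ρ →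
      f v - f u ≤ 4 * K * ‖v - u‖ * (‖u - y‖ + ‖v - y‖) := by
    intro u v hu hv huρ hvρ
    obtain ⟨hpu, hpu', -⟩ := hfoot u hu (by linarith)
    obtain ⟨hpv, hpv', hfv⟩ := hfoot v hv (by linarith)
    refine sub_le_of_height_dichotomy hconv hK hdich (by linarith) (by nlinarith) hu hv huρ hvρ
      (hpu' ▸ frontier_subset_closure hpu) (hpv' ▸ hpv.2) hfv ?_
    calc f v ≤ c₅ * ‖v - y‖ ^ 2 := hquad v hv (by linarith)
      _ ≤ c₅ * ρ ^ 2 := by gcongr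
      _ < κ := by nlinarith
  refine ⟨ρ, hρ, 4 * K, fun u v hu hv huρ hvρ => abs_sub_le_iff.2 ⟨hbound u v hu hv huρ hvρ, ?_⟩⟩
  simpa [norm_sub_rev, add_comm] using hbound v u hv hu hvρ huρ

/-- inequality (4.2) of Lemma 4.1: the "height below the tangent
hyperplane in direction φ" function `f(u) = |u - p(u)|` of a compact convex body
satisfies the Lipschitz-type bound `|f(v) - f(u)| ≤ C |v - u| (|u-y| + |v-y|)`
near `y`, given the quadratic upper bound `f(u) ≤ c₅ |u - y|²`. -/
theorem height_function_smooth {d : ℕ}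
    (B : Set (EuclideanSpace ℝ (Fin d)))
    (hconv : Convex ℝ B) (hcomp : IsCompact B)
    (h0 : (0 : EuclideanSpace ℝ (Fin d)) ∈ interior B)
    (y : EuclideanSpace ℝ (Fin d)) (hy : y ∈ frontier B)
    (n : EuclideanSpace ℝ (Fin d)) (hn : ‖n‖ = 1)
    (hsupp : ∀ u ∈ B, (inner ℝ u n : ℝ) ≤ (inner ℝ y n : ℝ))
    (φv : EuclideanSpace ℝ (Fin d)) (hφv : ‖φv‖ = 1)
    (β : ℝ) (hβ : 0 < β) (hβ2 : β < Real.pi / 2)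
    (hangle : Real.sin β ≤ (inner ℝ φv n : ℝ))
    (c₅ ε₀ : ℝ) (hc₅ : 0 < c₅) (hε₀ : 0 < ε₀)
    (p : EuclideanSpace ℝ (Fin d) → EuclideanSpace ℝ (Fin d))
    (f : EuclideanSpace ℝ (Fin d) → ℝ)
    (hp : ∀ u, (inner ℝ (u - y) n : ℝ) = 0 → ‖u - y‖ ≤ ε₀ →
      p u ∈ frontier B ∧ ∃ t : ℝ, 0 ≤ t ∧ p u = u - t • φv)
    (hf : ∀ u, f u = ‖u - p u‖)
    (hquad : ∀ u, (inner ℝ (u - y) n : ℝ) = 0 → ‖u - y‖ ≤ ε₀ →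
      f u ≤ c₅ * ‖u - y‖ ^ 2) :
    ∃ ρ : ℝ, 0 < ρ ∧ ∃ C : ℝ, ∀ u v,
      (inner ℝ (u - y) n : ℝ) = 0 → (inner ℝ (v - y) n : ℝ) = 0 →
      ‖u - y‖ < ρ → ‖v - y‖ < ρ →
      |f v - f u| ≤ C * ‖v - u‖ * (‖u - y‖ + ‖v - y‖) :=
  height_function_smooth_general B hconv h0 y n hsupp φv hφv β hβ hβ2 hangle c₅ ε₀ hc₅ hε₀ p f hp hf
    hquad
end

section
/- Let g be a norm on ℝ^d that is invariant under permutations of the coordinates and sign changes of the coordinates. Let y ∈ ∂B_g be a point of the unit sphere of g and H a supporting hyperplane to B_g at y. Then the angle between the vector y and the hyperplane H is at least arcsin(1/√d). -/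
/-!
Flipping signs and permuting coordinates does not change `g`, so every such image `u` of `y`
lies on the unit sphere and the supporting inequality gives `⟪u, n⟫ ≤ ⟪y, n⟫`. Choosing the
signs to make all products `uᵢ nᵢ` nonnegative and the permutation to sort `|uᵢ|` along `|nᵢ|`,
Chebyshev's sum inequality for `uᵢ²`, `nᵢ²` and `∑ (|uᵢ| |nᵢ|)² ≤ (∑ |uᵢ| |nᵢ|)²` give
`|y|² |n|² ≤ d (∑ |uᵢ| |nᵢ|)² ≤ d ⟪y, n⟫²`.
-/

open Finset

theorem exists_perm_monovary_comp {α : Type*} [LinearOrder α] {m : ℕ} (f g : Fin m → α) :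
    ∃ π : Equiv.Perm (Fin m), Monovary (f ∘ π) g := by
  refine ⟨(Tuple.sort g).symm.trans (Tuple.sort f), ?_⟩
  have h := ((Tuple.monotone_sort f).monovary (Tuple.monotone_sort g)).comp_right
    (Tuple.sort g).symm
  simpa [Function.comp_def] using h

theorem Monovary.sum_sq_mul_sum_sq_le_card_mul_sq_sum {ι : Type*} [Fintype ι] {x y : ι → ℝ}
    (h : Monovary (fun i => |x i|) (fun i => |y i|)) :
    (∑ i, x i ^ 2) * ∑ i, y i ^ 2 ≤ Fintype.card ι * (∑ i, |x i| * |y i|) ^ 2 := by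
  have hsq : Monovary (fun i => x i ^ 2) (fun i => y i ^ 2) := fun i j hij =>
    sq_le_sq.2 (h (sq_lt_sq.1 hij))
  calc (∑ i, x i ^ 2) * ∑ i, y i ^ 2 ≤ Fintype.card ι * ∑ i, x i ^ 2 * y i ^ 2 :=
        hsq.sum_mul_sum_le_card_mul_sum
    _ = Fintype.card ι * ∑ i, (|x i| * |y i|) ^ 2 := by simp only [mul_pow, sq_abs]
    _ ≤ Fintype.card ι * (∑ i, |x i| * |y i|) ^ 2 := by
        gcongr
        exact sum_sq_le_sq_sum_of_nonneg fun i _ => by positivity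

theorem exists_signs_mul_mul_eq_abs_mul_abs {ι : Type*} (x y : ι → ℝ) :
    ∃ s : ι → ℝ, (∀ i, s i = 1 ∨ s i = -1) ∧ ∀ i, s i * x i * y i = |x i| * |y i| := by
  refine ⟨fun i => if x i * y i < 0 then -1 else 1, fun i => by beta_reduce; split_ifs <;> simp,
    fun i => ?_⟩
  beta_reduce
  rw [mul_assoc, ← abs_mul]
  split_ifs with h
  · rw [abs_of_neg h, neg_one_mul]
  · rw [abs_of_nonneg (not_lt.1 h), one_mul]

theorem sqrt_div_sqrt_le_of_le_mul_sq {a d c : ℝ} (hd : 0 ≤ d) (hc : 0 ≤ c) (h : a ≤ d * c ^ 2) :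
    √a / √d ≤ c := by
  rw [← Real.sqrt_div' a hd, Real.sqrt_le_iff]
  exact ⟨hc, div_le_of_le_mul₀ hd (sq_nonneg c) (by linarith)⟩

theorem arcsin_bound_general (d : ℕ) (g : (Fin d → ℝ) → ℝ)
    (hperm : ∀ (σ : Equiv.Perm (Fin d)) (x : Fin d → ℝ),
      g (fun i => x (σ i)) = g x)
    (hsign : ∀ s : Fin d → ℝ, (∀ i, s i = 1 ∨ s i = -1) →
      ∀ x : Fin d → ℝ, g (fun i => s i * x i) = g x)
    (y n : Fin d → ℝ) (hy : g y = 1)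
    (hn : ∑ i, (n i) ^ 2 = 1)
    (hsupp : ∀ u : Fin d → ℝ, g u ≤ 1 → ∑ i, u i * n i ≤ ∑ i, y i * n i) :
    Real.sqrt (∑ i, (y i) ^ 2) / Real.sqrt d ≤ |∑ i, y i * n i| := by
  obtain ⟨π, hπ⟩ := exists_perm_monovary_comp (fun i => |y i|) (fun i => |n i|)
  obtain ⟨s, hs, hsn⟩ := exists_signs_mul_mul_eq_abs_mul_abs (fun i => y (π i)) n
  have hpaired : ∑ i, |y (π i)| * |n i| ≤ ∑ i, y i * n i := by
    simp only [← hsn]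
    exact hsupp _ (by rw [hsign s hs, hperm π, hy])
  have hcheb := Monovary.sum_sq_mul_sum_sq_le_card_mul_sq_sum (x := fun i => y (π i)) hπ
  rw [Equiv.sum_comp π (fun i => y i ^ 2), hn, mul_one, Fintype.card_fin] at hcheb
  refine sqrt_div_sqrt_le_of_le_mul_sq d.cast_nonneg (abs_nonneg _) (hcheb.trans ?_)
  gcongr
  exact hpaired.trans (le_abs_self _)

/-- the arcsin bound: for a lattice-symmetric norm `g` on `ℝ^d`,
the angle between any boundary point `y` of the unit ball and any supporting
hyperplane at `y` is at least `arcsin(1/√d)`; equivalently, the (absolute)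
inner product of `y` with the unit normal `n` is at least `|y|/√d`. -/
theorem arcsin_bound (d : ℕ) (hd : 0 < d) (g : (Fin d → ℝ) → ℝ)
    (hg0 : ∀ u, 0 ≤ g u)
    (hgadd : ∀ u v, g (u + v) ≤ g u + g v)
    (hgsmul : ∀ (t : ℝ) (u : Fin d → ℝ), g (t • u) = |t| * g u)
    (hgdef : ∀ u, g u = 0 → u = 0)
    (hperm : ∀ (σ : Equiv.Perm (Fin d)) (x : Fin d → ℝ),
      g (fun i => x (σ i)) = g x)
    (hsign : ∀ s : Fin d → ℝ, (∀ i, s i = 1 ∨ s i = -1) →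
      ∀ x : Fin d → ℝ, g (fun i => s i * x i) = g x)
    (y n : Fin d → ℝ) (hy : g y = 1)
    (hn : ∑ i, (n i) ^ 2 = 1)
    (hsupp : ∀ u : Fin d → ℝ, g u ≤ 1 → ∑ i, u i * n i ≤ ∑ i, y i * n i) :
    Real.sqrt (∑ i, (y i) ^ 2) / Real.sqrt d ≤ |∑ i, y i * n i| :=
  arcsin_bound_general d g hperm hsign y n hy hn hsupp
end

section
/- Let g be a norm on ℝ^d, θ a unit vector with y_θ the point of ∂B_g in direction θ, and suppose θ is a direction of sub-curvature: g(u) ≤ 1 + c₅|u − y_θ|² for u in the tangent hyperplane H_{θ,1} at y_θ with |u − y_θ| ≤ ε₀. Let x ∈ ℝ^d satisfy |x/|x| − θ| ≤ g(x)^{−1/6}, let π_θ x denote the tangential θ-projection of x onto the line through 0 and y_θ (projection along H_{θ,0}), and suppose the angle between θ and H_{θ,0} is at least arcsin(1/√d). Then there exist constants c, c' (depending only on g, θ) such that |x − π_θ x| ≤ c·g(x)^{5/6} and |g(x) − g(π_θ x)| ≤ c'·g(x)^{2/3}. -/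
/-!
Since `π` fixes `θ ∈ ℝ ∙ y`, we have `x - π x = (x - ‖x‖ θ) - π (x - ‖x‖ θ)`, and `π` is bounded
because `⟪y, n⟫ ≥ ‖n‖² / g(n) > 0` by the supporting hyperplane; with `‖x‖ ≍ g(x)` this gives
`‖x - π x‖ = O(g(x)^{5/6})`. For the second estimate, `g(π x) ≤ g(x)` again by the supporting
hyperplane, and rescaling `x` by `g(π x)⁻¹` puts it on the tangent hyperplane at distance
`‖x - π x‖ / g(π x)` from `y`, so sub-curvature gives `g(x) - g(π x) ≤ c₅ ‖x - π x‖² / g(π x)`.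
Once `g(x)` is large, `g(π x) ≥ g(x) / 2` and this is `O(g(x)^{2/3})`; for bounded `g(x)` the
Lipschitz bound `|g(x) - g(π x)| = O(‖x - π x‖)` suffices.
-/

open scoped RealInnerProductSpace

section FiniteDimensional

variable {E : Type*} [NormedAddCommGroup E] [NormedSpace ℝ E] [FiniteDimensional ℝ E]

theorem Seminorm.continuous_of_finiteDimensional (p : Seminorm ℝ E) : Continuous p :=
  continuousOn_univ.1 (p.convexOn.continuousOn isOpen_univ)

theorem Seminorm.exists_le_mul_norm (p : Seminorm ℝ E) : ∃ M, 0 < M ∧ ∀ u, p u ≤ M * ‖u‖ :=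
  p.bound_of_continuous_normedSpace p.continuous_of_finiteDimensional

theorem Seminorm.exists_mul_norm_le (p : Seminorm ℝ E) (hp : ∀ u, p u = 0 → u = 0) :
    ∃ m, 0 < m ∧ ∀ u, m * ‖u‖ ≤ p u := by
  have hpos : ∀ u ∈ Metric.sphere (0 : E) 1, 0 < p u := fun u hu =>
    (apply_nonneg p u).lt_of_ne fun h =>
      ne_zero_of_mem_unit_sphere ⟨u, hu⟩ (hp u h.symm)
  obtain ⟨m, hm, hmin⟩ := (isCompact_sphere (0 : E) 1).exists_forall_le'
    p.continuous_of_finiteDimensional.continuousOn hpos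
  refine ⟨m, hm, fun u => ?_⟩
  rcases eq_or_ne u 0 with rfl | hu
  · simp
  have hu' : 0 < ‖u‖ := norm_pos_iff.2 hu
  have h := hmin (‖u‖⁻¹ • u) (by simp [norm_smul, hu'.ne'])
  rwa [map_smul_eq_mul, norm_inv, norm_norm, le_inv_mul_iff₀ hu', mul_comm] at h

end FiniteDimensional

section Supporting

variable {E : Type*} [NormedAddCommGroup E] [InnerProductSpace ℝ E] {p : Seminorm ℝ E} {y n : E}

theorem inner_le_mul_of_supporting (hsupp : ∀ u, p u ≤ 1 → ⟪u, n⟫ ≤ ⟪y, n⟫) {u : E}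
    (hu : 0 < p u) : ⟪u, n⟫ ≤ ⟪y, n⟫ * p u := by
  have h := hsupp ((p u)⁻¹ • u) (by rw [map_smul_eq_mul, norm_inv, Real.norm_of_nonneg hu.le,
    inv_mul_cancel₀ hu.ne'])
  rwa [real_inner_smul_left, inv_mul_le_iff₀ hu, mul_comm] at h

theorem abs_inner_le_mul_of_supporting (hsupp : ∀ u, p u ≤ 1 → ⟪u, n⟫ ≤ ⟪y, n⟫) {u : E}
    (hu : 0 < p u) : |⟪u, n⟫| ≤ ⟪y, n⟫ * p u := by
  have hneg := inner_le_mul_of_supporting hsupp (u := -u) (by rwa [map_neg_eq_map])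
  rw [map_neg_eq_map, inner_neg_left] at hneg
  exact abs_le.2 ⟨by linarith, inner_le_mul_of_supporting hsupp hu⟩

theorem inner_pos_of_supporting (hsupp : ∀ u, p u ≤ 1 → ⟪u, n⟫ ≤ ⟪y, n⟫) (hn : 0 < p n) :
    0 < ⟪y, n⟫ := by
  have hn0 : n ≠ 0 := by rintro rfl; simp at hn
  exact pos_of_mul_pos_left ((real_inner_self_pos.2 hn0).trans_le
    (inner_le_mul_of_supporting hsupp hn)) hn.le

end Supporting

section TangentialProjection

variable {E : Type*} [NormedAddCommGroup E] [InnerProductSpace ℝ E] {y n : E}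

/-- The paper's `π_θ`: projection onto `ℝ ∙ y` along the hyperplane `⟪·, n⟫ = 0`. -/
noncomputable def tangentialProj (y n x : E) : E := (⟪x, n⟫ / ⟪y, n⟫) • y

theorem norm_sub_tangentialProj_le (hβ : ⟪y, n⟫ ≠ 0) (x : E) (a : ℝ) :
    ‖x - tangentialProj y n x‖ ≤ (1 + ‖n‖ * ‖y‖ / |⟪y, n⟫|) * ‖x - a • y‖ := by
  set w := x - a • y
  have hx : x - tangentialProj y n x = w - (⟪w, n⟫ / ⟪y, n⟫) • y := by
    have hcoef : ⟪x, n⟫ / ⟪y, n⟫ = ⟪w, n⟫ / ⟪y, n⟫ + a := by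
      simp only [w, inner_sub_left, real_inner_smul_left]
      field_simp
      ring
    rw [tangentialProj, hcoef, add_smul]
    simp only [w]
    abel
  have hcoef : |⟪w, n⟫ / ⟪y, n⟫| ≤ ‖w‖ * ‖n‖ / |⟪y, n⟫| := by
    rw [abs_div]
    gcongr
    exact abs_real_inner_le_norm w n
  calc ‖x - tangentialProj y n x‖ ≤ ‖w‖ + |⟪w, n⟫ / ⟪y, n⟫| * ‖y‖ := by
        rw [hx, ← Real.norm_eq_abs, ← norm_smul]
        exact norm_sub_le _ _
    _ ≤ ‖w‖ + ‖w‖ * ‖n‖ / |⟪y, n⟫| * ‖y‖ := by gcongr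
    _ = (1 + ‖n‖ * ‖y‖ / |⟪y, n⟫|) * ‖w‖ := by ring

theorem norm_sub_tangentialProj_le_of_smul_eq (hβ : ⟪y, n⟫ ≠ 0) {a : ℝ} {θ : E} (hθ : a • y = θ)
    {x : E} (hx : x ≠ 0) :
    ‖x - tangentialProj y n x‖ ≤ (1 + ‖n‖ * ‖y‖ / |⟪y, n⟫|) * (‖x‖ * ‖‖x‖⁻¹ • x - θ‖) := by
  have hdir : x - (‖x‖ * a) • y = ‖x‖ • (‖x‖⁻¹ • x - θ) := by
    rw [mul_smul, hθ, smul_sub, smul_inv_smul₀ (norm_ne_zero_iff.2 hx)]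
  have h := norm_sub_tangentialProj_le hβ x (‖x‖ * a)
  rwa [hdir, norm_smul, norm_norm] at h

variable {p : Seminorm ℝ E}

theorem map_tangentialProj (hy : p y = 1) (hβ : 0 < ⟪y, n⟫) (x : E) :
    p (tangentialProj y n x) = |⟪x, n⟫| / ⟪y, n⟫ := by
  rw [tangentialProj, map_smul_eq_mul, hy, mul_one, Real.norm_eq_abs, abs_div, abs_of_pos hβ]

theorem map_tangentialProj_le (hsupp : ∀ u, p u ≤ 1 → ⟪u, n⟫ ≤ ⟪y, n⟫) (hy : p y = 1)
    (hβ : 0 < ⟪y, n⟫) {x : E} (hx : 0 < p x) : p (tangentialProj y n x) ≤ p x := by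
  rw [map_tangentialProj hy hβ, div_le_iff₀' hβ]
  exact abs_inner_le_mul_of_supporting hsupp hx

theorem map_sub_map_tangentialProj_le (hy : p y = 1) (hβ : 0 < ⟪y, n⟫) {c₅ ε₀ : ℝ}
    (hsubcurv : ∀ u, ⟪u - y, n⟫ = 0 → ‖u - y‖ ≤ ε₀ → p u ≤ 1 + c₅ * ‖u - y‖ ^ 2)
    {x : E} (hx : 0 < p (tangentialProj y n x))
    (hclose : ‖x - tangentialProj y n x‖ ≤ ε₀ * p (tangentialProj y n x)) :
    p x - p (tangentialProj y n x) ≤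
      c₅ * ‖x - tangentialProj y n x‖ ^ 2 / p (tangentialProj y n x) := by
  set t := ⟪x, n⟫ / ⟪y, n⟫
  have hpt : p (tangentialProj y n x) = |t| := by
    rw [map_tangentialProj hy hβ, abs_div, abs_of_pos hβ]
  rw [hpt] at hx hclose ⊢
  have ht : t ≠ 0 := abs_pos.1 hx
  set v := t⁻¹ • x
  have hvy : v - y = t⁻¹ • (x - tangentialProj y n x) := by
    rw [tangentialProj, smul_sub, smul_smul, inv_mul_cancel₀ ht, one_smul]
  have hnorm : ‖v - y‖ = ‖x - tangentialProj y n x‖ / |t| := by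
    rw [hvy, norm_smul, norm_inv, Real.norm_eq_abs, inv_mul_eq_div]
  have hv := hsubcurv v
    (by rw [hvy, real_inner_smul_left, tangentialProj, inner_sub_left, real_inner_smul_left,
      div_mul_cancel₀ _ hβ.ne', sub_self, mul_zero])
    (by rw [hnorm, div_le_iff₀ hx]; exact hclose)
  have hxv : p x = |t| * p v := by
    rw [← Real.norm_eq_abs, ← map_smul_eq_mul, smul_inv_smul₀ ht]
  rw [hnorm] at hv
  calc p x - |t| ≤ |t| * (1 + c₅ * (‖x - tangentialProj y n x‖ / |t|) ^ 2) - |t| := by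
        rw [hxv]; gcongr
    _ = c₅ * ‖x - tangentialProj y n x‖ ^ 2 / |t| := by field_simp; ring

theorem exists_abs_map_sub_map_tangentialProj_le (hsupp : ∀ u, p u ≤ 1 → ⟪u, n⟫ ≤ ⟪y, n⟫)
    (hy : p y = 1) (hβ : 0 < ⟪y, n⟫) {c₅ ε₀ : ℝ} (hc₅ : 0 ≤ c₅) (hε₀ : 0 < ε₀)
    (hsubcurv : ∀ u, ⟪u - y, n⟫ = 0 → ‖u - y‖ ≤ ε₀ → p u ≤ 1 + c₅ * ‖u - y‖ ^ 2)
    {M : ℝ} (hM0 : 0 < M) (hM : ∀ u, p u ≤ M * ‖u‖) {c : ℝ} (hc : 0 < c) :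
    ∃ c', 0 < c' ∧ ∀ (x : E) (s : ℝ), 0 < s → p x = s ^ 6 →
      ‖x - tangentialProj y n x‖ ≤ c * s ^ 5 →
        |p x - p (tangentialProj y n x)| ≤ c' * s ^ 4 := by
  set S := max (2 * M * c) (2 * c / ε₀)
  have hS : 0 < S := lt_max_of_lt_left (by positivity)
  refine ⟨M * c * S + 2 * c₅ * c ^ 2, by positivity, fun x s hs hpx hclose => ?_⟩
  set e := ‖x - tangentialProj y n x‖
  set t := p (tangentialProj y n x)
  have hlip : |p x - t| ≤ M * (c * s ^ 5) :=
    (abs_sub_map_le_sub p x _).trans ((hM _).trans (by gcongr))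
  rcases le_or_gt s S with hsS | hSs
  · calc |p x - t| ≤ M * c * s * s ^ 4 := by linarith
      _ ≤ M * c * S * s ^ 4 := by gcongr
      _ ≤ (M * c * S + 2 * c₅ * c ^ 2) * s ^ 4 := by
        gcongr; exact le_add_of_nonneg_right (by positivity)
  have hMs : 2 * M * c < s := (le_max_left _ _).trans_lt hSs
  have hεs : 2 * c < ε₀ * s := by
    have := (le_max_right _ _).trans_lt hSs
    rw [div_lt_iff₀ hε₀] at this
    linarith
  have ht : s ^ 6 / 2 ≤ t := by
    have := (abs_le.1 hlip).2
    nlinarith [pow_pos hs 5]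
  have htpos : 0 < t := (by positivity : (0 : ℝ) < s ^ 6 / 2).trans_le ht
  have hclose' : e ≤ ε₀ * t := by
    calc e ≤ c * s ^ 5 := hclose
      _ ≤ ε₀ * (s ^ 6 / 2) := by nlinarith [pow_pos hs 5]
      _ ≤ ε₀ * t := by gcongr
  have hle : t ≤ p x := map_tangentialProj_le hsupp hy hβ (by rw [hpx]; positivity)
  rw [abs_of_nonneg (sub_nonneg.2 hle)]
  calc p x - t ≤ c₅ * e ^ 2 / t := map_sub_map_tangentialProj_le hy hβ hsubcurv htpos hclose'
    _ ≤ c₅ * (c * s ^ 5) ^ 2 / (s ^ 6 / 2) := by gcongr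
    _ = 2 * c₅ * c ^ 2 * s ^ 4 := by field_simp
    _ ≤ (M * c * S + 2 * c₅ * c ^ 2) * s ^ 4 := by
        gcongr; exact le_add_of_nonneg_left (by positivity)

end TangentialProjection

theorem tangential_projection_estimates_general {d : ℕ}
    (g : EuclideanSpace ℝ (Fin d) → ℝ)
    (hgadd : ∀ u v, g (u + v) ≤ g u + g v)
    (hgsmul : ∀ (t : ℝ) u, g (t • u) = |t| * g u)
    (hgdef : ∀ u, g u = 0 → u = 0)
    (θ : EuclideanSpace ℝ (Fin d)) (hgθ : 0 < g θ)
    (y : EuclideanSpace ℝ (Fin d)) (hydef : y = (g θ)⁻¹ • θ)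
    (n : EuclideanSpace ℝ (Fin d)) (hn : ‖n‖ = 1)
    (hsupp : ∀ u, g u ≤ 1 → (inner ℝ u n : ℝ) ≤ (inner ℝ y n : ℝ))
    (c₅ ε₀ : ℝ) (hc₅ : 0 < c₅) (hε₀ : 0 < ε₀)
    (hsubcurv : ∀ u, (inner ℝ (u - y) n : ℝ) = 0 → ‖u - y‖ ≤ ε₀ →
      g u ≤ 1 + c₅ * ‖u - y‖ ^ 2) :
    ∃ c : ℝ, 0 < c ∧ ∃ c' : ℝ, 0 < c' ∧
      ∀ x : EuclideanSpace ℝ (Fin d), x ≠ 0 →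
        ‖(‖x‖⁻¹ • x) - θ‖ ≤ g x ^ (-(1/6) : ℝ) →
        ‖x - (((inner ℝ x n : ℝ) / (inner ℝ y n : ℝ)) • y)‖ ≤ c * g x ^ ((5 : ℝ)/6) ∧
        |g x - g (((inner ℝ x n : ℝ) / (inner ℝ y n : ℝ)) • y)| ≤
          c' * g x ^ ((2 : ℝ)/3) := by
  set p : Seminorm ℝ (EuclideanSpace ℝ (Fin d)) :=
    Seminorm.of g hgadd (fun a u => by rw [hgsmul, Real.norm_eq_abs])
  obtain ⟨M, hM0, hM⟩ := p.exists_le_mul_norm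
  obtain ⟨m, hm0, hm⟩ := p.exists_mul_norm_le hgdef
  have hy : g y = 1 := by
    rw [hydef, hgsmul, abs_of_pos (inv_pos.2 hgθ), inv_mul_cancel₀ hgθ.ne']
  have hθy : g θ • y = θ := by rw [hydef, smul_smul, mul_inv_cancel₀ hgθ.ne', one_smul]
  have hβ : 0 < ⟪y, n⟫ :=
    inner_pos_of_supporting hsupp ((mul_pos hm0 (hn ▸ one_pos)).trans_le (hm n))
  set C := 1 + ‖n‖ * ‖y‖ / |⟪y, n⟫|
  obtain ⟨c', hc', hbound⟩ := exists_abs_map_sub_map_tangentialProj_le hsupp hy hβ hc₅.le hε₀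
    hsubcurv hM0 hM (c := C / m) (by positivity)
  refine ⟨C / m, by positivity, c', hc', fun x hx hxθ => ?_⟩
  have hgx : 0 < g x := (mul_pos hm0 (norm_pos_iff.2 hx)).trans_le (hm x)
  set s := g x ^ (1 / 6 : ℝ)
  have hs : 0 < s := by positivity
  have hpow (k : ℕ) : g x ^ ((1 / 6 : ℝ) * k) = s ^ k := Real.rpow_mul_natCast hgx.le _ k
  have h6 : g x = s ^ 6 := by rw [← hpow]; norm_num
  rw [Real.rpow_neg hgx.le] at hxθ
  rw [show (5 : ℝ) / 6 = 1 / 6 * (5 : ℕ) by norm_num, show (2 : ℝ) / 3 = 1 / 6 * (4 : ℕ) by norm_num,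
    hpow, hpow]
  have hclose : ‖x - tangentialProj y n x‖ ≤ C / m * s ^ 5 := calc
    ‖x - tangentialProj y n x‖ ≤ C * (‖x‖ * ‖‖x‖⁻¹ • x - θ‖) :=
      norm_sub_tangentialProj_le_of_smul_eq hβ.ne' hθy hx
    _ ≤ C * (g x / m * s⁻¹) := by gcongr; exact (le_div_iff₀' hm0).2 (hm x)
    _ = C / m * s ^ 5 := by rw [h6]; field_simp
  exact ⟨hclose, hbound x s hs h6 hclose⟩

/-- estimate (4.36) in Case 1b of Lemma 4.2: for `x` whose
direction is within `g(x)^{-1/6}` of a direction of sub-curvature `θ`, the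
tangential projection `π_θ x = (⟨x,n⟩/⟨y,n⟩) y` satisfies
`|x - π_θ x| ≤ c g(x)^{5/6}` and `|g(x) - g(π_θ x)| ≤ c' g(x)^{2/3}`. -/
theorem tangential_projection_estimates {d : ℕ} (hd : 0 < d)
    (g : EuclideanSpace ℝ (Fin d) → ℝ)
    (hg0 : ∀ u, 0 ≤ g u)
    (hgadd : ∀ u v, g (u + v) ≤ g u + g v)
    (hgsmul : ∀ (t : ℝ) u, g (t • u) = |t| * g u)
    (hgdef : ∀ u, g u = 0 → u = 0)
    (θ : EuclideanSpace ℝ (Fin d)) (hθ : ‖θ‖ = 1) (hgθ : 0 < g θ)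
    (y : EuclideanSpace ℝ (Fin d)) (hydef : y = (g θ)⁻¹ • θ)
    (n : EuclideanSpace ℝ (Fin d)) (hn : ‖n‖ = 1)
    (hsupp : ∀ u, g u ≤ 1 → (inner ℝ u n : ℝ) ≤ (inner ℝ y n : ℝ))
    (harcsin : 1 / Real.sqrt d ≤ |(inner ℝ θ n : ℝ)|)
    (c₅ ε₀ : ℝ) (hc₅ : 0 < c₅) (hε₀ : 0 < ε₀)
    (hsubcurv : ∀ u, (inner ℝ (u - y) n : ℝ) = 0 → ‖u - y‖ ≤ ε₀ →
      g u ≤ 1 + c₅ * ‖u - y‖ ^ 2) :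
    ∃ c : ℝ, 0 < c ∧ ∃ c' : ℝ, 0 < c' ∧
      ∀ x : EuclideanSpace ℝ (Fin d), x ≠ 0 →
        ‖(‖x‖⁻¹ • x) - θ‖ ≤ g x ^ (-(1/6) : ℝ) →
        ‖x - (((inner ℝ x n : ℝ) / (inner ℝ y n : ℝ)) • y)‖ ≤ c * g x ^ ((5 : ℝ)/6) ∧
        |g x - g (((inner ℝ x n : ℝ) / (inner ℝ y n : ℝ)) • y)| ≤
          c' * g x ^ ((2 : ℝ)/3) :=
  tangential_projection_estimates_general g hgadd hgsmul hgdef θ hgθ y hydef n hn hsupp c₅ ε₀ hc₅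
    hε₀ hsubcurv
end

section
/- Let g be a norm on ℝ^d and θ, α unit vectors, and suppose θ is such that a supporting hyperplane direction H_{θ,0} exists with the angle between θ and H_{θ,0} at least arcsin(1/√d). Suppose the angle between H_{α,0} and H_{θ,0} is less than ε₁ and |α − θ| < ε₁ for a sufficiently small ε₁ > 0 (depending only on g and d). Let x be in direction α, and let Z ∈ ℝ^d with Φ_θ(Z) ≤ −r for some r > 0 (i.e. Z lies at least g-distance r on the negative side of H_{θ,0}, measured via the longitudinal projection), and assume g(Z) < 2g(x) and Φ_θ(x) ≥ g(x)/2. Then g(Z) + g(x − Z) − g(x) ≥ (1/2)(r + g(Z)). -/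
/-! Write `Φ_β(u) = ⟪u, n_β⟫ / ⟪y_β, n_β⟫`. Since the hyperplane through `y_β` with normal `n_β`
supports the unit ball of `g`, we have `Φ_β ≤ g`, with equality on the ray through `β`. Hence
`g(x - Z) ≥ Φ_α(x - Z) = g(x) - Φ_α(Z)`, and it remains to see `Φ_α(Z) ≤ Φ_θ(Z) + g(Z)/2`.
Because `g` is equivalent to the Euclidean norm, `|Φ_θ - Φ_α| ≤ C ‖n_θ - n_α‖ g` for a constant `C`
depending only on `g`, so this holds once `‖n_θ - n_α‖` is small. The angle condition
only gives `n_α ≈ ±n_θ`; the sign is forced because both `⟪θ, n_θ⟫` and `⟪α, n_α⟫` are bounded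
below while `α ≈ θ`. -/

open Real
open scoped RealInnerProductSpace

section UnitVectors

variable {E : Type*} [NormedAddCommGroup E] [InnerProductSpace ℝ E] {a b : E} {ε : ℝ}

lemma norm_sub_lt_of_arccos_inner_lt (ha : ‖a‖ = 1) (hb : ‖b‖ = 1) (h : arccos ⟪a, b⟫ < ε) :
    ‖a - b‖ < ε := by
  have hab : |⟪a, b⟫| ≤ 1 := by simpa [ha, hb] using abs_real_inner_le_norm a b
  have hcos : 1 - arccos ⟪a, b⟫ ^ 2 / 2 ≤ ⟪a, b⟫ := by
    simpa [cos_arccos (abs_le.mp hab).1 (abs_le.mp hab).2] using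
      one_sub_sq_div_two_le_cos (x := arccos ⟪a, b⟫)
  have hsq : ‖a - b‖ ^ 2 < ε ^ 2 := by
    have := pow_lt_pow_left₀ h (arccos_nonneg _) two_ne_zero
    rw [norm_sub_sq_real, ha, hb]
    linarith
  exact lt_of_pow_lt_pow_left₀ 2 ((arccos_nonneg _).trans h.le) hsq

lemma norm_sub_lt_or_norm_add_lt_of_arccos_abs_inner_lt (ha : ‖a‖ = 1) (hb : ‖b‖ = 1)
    (h : arccos |⟪a, b⟫| < ε) : ‖a - b‖ < ε ∨ ‖a + b‖ < ε := by
  rcases abs_cases ⟪a, b⟫ with ⟨hab, -⟩ | ⟨hab, -⟩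
  · exact .inl (norm_sub_lt_of_arccos_inner_lt ha hb (hab ▸ h))
  · rw [← inner_neg_right] at hab
    have := norm_sub_lt_of_arccos_inner_lt ha (by rwa [norm_neg]) (hab ▸ h)
    exact .inr (by rwa [sub_neg_eq_add] at this)

end UnitVectors

namespace Seminorm

lemma apply_inv_smul_self {E : Type*} [AddCommGroup E] [Module ℝ E] (p : Seminorm ℝ E) {u : E}
    (hu : 0 < p u) : p ((p u)⁻¹ • u) = 1 := by
  rw [map_smul_eq_mul, norm_inv, Real.norm_of_nonneg hu.le, inv_mul_cancel₀ hu.ne']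

variable {E : Type*} [NormedAddCommGroup E] [NormedSpace ℝ E] [FiniteDimensional ℝ E]
  (p : Seminorm ℝ E)

lemma continuous_of_finiteDimensional_s19 : Continuous p :=
  continuousOn_univ.mp (p.convexOn.continuousOn isOpen_univ)

lemma exists_mul_norm_le_s19 (hp : ∀ u, p u = 0 → u = 0) : ∃ m, 0 < m ∧ ∀ u, m * ‖u‖ ≤ p u := by
  obtain ⟨m, hm, hsphere⟩ := (isCompact_sphere (0 : E) 1).exists_forall_le'
    p.continuous_of_finiteDimensional_s19.continuousOn (a := 0) fun u hu =>
      (apply_nonneg p u).lt_of_ne fun h => by simp [hp u h.symm] at hu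
  refine ⟨m, hm, fun u => ?_⟩
  rcases eq_or_ne u 0 with rfl | hu
  · simp
  · have := hsphere (‖u‖⁻¹ • u) (by simp [norm_smul, hu])
    rw [map_smul_eq_mul, norm_inv, norm_norm, le_inv_mul_iff₀ (norm_pos_iff.mpr hu)] at this
    linarith

end Seminorm

section SupportingHyperplanes

variable {E : Type*} [NormedAddCommGroup E] [InnerProductSpace ℝ E]

def IsSupportingNormal (p : Seminorm ℝ E) (y n : E) : Prop :=
  ∀ u, p u ≤ 1 → ⟪u, n⟫ ≤ ⟪y, n⟫

/-- The paper's `Φ_θ(u)` for `y = y_θ` and `n` the normal of `H_{θ,0}`. -/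
noncomputable def hyperplaneCoord (y n u : E) : ℝ := ⟪u, n⟫ / ⟪y, n⟫

lemma hyperplaneCoord_sub (y n u v : E) :
    hyperplaneCoord y n (u - v) = hyperplaneCoord y n u - hyperplaneCoord y n v := by
  simp only [hyperplaneCoord, inner_sub_left, sub_div]

lemma hyperplaneCoord_smul_self {y n : E} (h : ⟪y, n⟫ ≠ 0) (t : ℝ) :
    hyperplaneCoord y n (t • y) = t := by
  rw [hyperplaneCoord, real_inner_smul_left, mul_div_cancel_right₀ _ h]

lemma hyperplaneCoord_inv_smul_smul (p : Seminorm ℝ E) {β n : E} (hβ : 0 < p β)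
    (hc : ⟪(p β)⁻¹ • β, n⟫ ≠ 0) {t : ℝ} (ht : 0 ≤ t) :
    hyperplaneCoord ((p β)⁻¹ • β) n (t • β) = p (t • β) := by
  have hsmul : t • β = (t * p β) • ((p β)⁻¹ • β) := by
    rw [smul_smul, mul_assoc, mul_inv_cancel₀ hβ.ne', mul_one]
  rw [hsmul, hyperplaneCoord_smul_self hc, map_smul_eq_mul, p.apply_inv_smul_self hβ,
    Real.norm_of_nonneg (mul_nonneg ht hβ.le), mul_one]

namespace IsSupportingNormal

variable {p : Seminorm ℝ E} {y n : E} {m M ε : ℝ}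

lemma inner_nonneg (h : IsSupportingNormal p y n) : 0 ≤ ⟪y, n⟫ := by
  simpa using h 0 (by simp)

lemma inner_le (h : IsSupportingNormal p y n) (hp : ∀ u, p u = 0 → u = 0) (u : E) :
    ⟪u, n⟫ ≤ ⟪y, n⟫ * p u := by
  rcases eq_or_ne u 0 with rfl | hu
  · simp
  have hpu : 0 < p u := (apply_nonneg p u).lt_of_ne' (mt (hp u) hu)
  have := h ((p u)⁻¹ • u) (p.apply_inv_smul_self hpu).le
  rwa [real_inner_smul_left, inv_mul_le_iff₀ hpu, mul_comm] at this

lemma abs_inner_le (h : IsSupportingNormal p y n) (hp : ∀ u, p u = 0 → u = 0) (u : E) :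
    |⟪u, n⟫| ≤ ⟪y, n⟫ * p u := by
  have := h.inner_le hp (-u)
  rw [inner_neg_left, map_neg_eq_map] at this
  exact abs_le.mpr ⟨by linarith, h.inner_le hp u⟩

lemma hyperplaneCoord_le (h : IsSupportingNormal p y n) (hp : ∀ u, p u = 0 → u = 0)
    (hc : 0 < ⟪y, n⟫) (u : E) : hyperplaneCoord y n u ≤ p u :=
  div_le_of_le_mul₀ hc.le (apply_nonneg p u) ((h.inner_le hp u).trans_eq (mul_comm _ _))

lemma inv_le_inner (h : IsSupportingNormal p y n) (hp : ∀ u, p u = 0 → u = 0) (hn : ‖n‖ = 1)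
    (hM : ∀ u, p u ≤ M * ‖u‖) : M⁻¹ ≤ ⟪y, n⟫ := by
  have hnn : 1 ≤ ⟪y, n⟫ * p n := by
    simpa [real_inner_self_eq_norm_sq, hn] using h.inner_le hp n
  have hpM : p n ≤ M := by simpa [hn] using hM n
  have hcM : 1 ≤ ⟪y, n⟫ * M := hnn.trans (mul_le_mul_of_nonneg_left hpM h.inner_nonneg)
  have hM0 : 0 < M := pos_of_mul_pos_right (one_pos.trans_le hcM) h.inner_nonneg
  rwa [inv_le_iff_one_le_mul₀ hM0]

lemma inner_le_inner_add (h : IsSupportingNormal p y n) {y' : E} (hy' : p y' ≤ 1) (hm : 0 < m)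
    (hm' : ∀ u, m * ‖u‖ ≤ p u) (n' : E) : ⟪y', n'⟫ ≤ ⟪y, n⟫ + ‖n' - n‖ / m := by
  have hy'm : ‖y'‖ ≤ 1 / m := by rw [le_div_iff₀' hm]; exact (hm' y').trans hy'
  calc ⟪y', n'⟫ = ⟪y', n⟫ + ⟪y', n' - n⟫ := by rw [inner_sub_right]; ring
    _ ≤ ⟪y, n⟫ + 1 / m * ‖n' - n‖ := by
      gcongr
      · exact h y' hy'
      · exact (real_inner_le_norm _ _).trans (by gcongr)
    _ = ⟪y, n⟫ + ‖n' - n‖ / m := by ring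

lemma abs_hyperplaneCoord_sub_le {y₁ n₁ y₂ n₂ : E} (h₁ : IsSupportingNormal p y₁ n₁)
    (h₂ : IsSupportingNormal p y₂ n₂) (hp : ∀ u, p u = 0 → u = 0) (hy₁ : p y₁ ≤ 1)
    (hy₂ : p y₂ ≤ 1) (hc₁ : 0 < ⟪y₁, n₁⟫) (hc₂ : 0 < ⟪y₂, n₂⟫) (hm : 0 < m)
    (hm' : ∀ u, m * ‖u‖ ≤ p u) (u : E) :
    |hyperplaneCoord y₁ n₁ u - hyperplaneCoord y₂ n₂ u| ≤
      2 * ‖n₁ - n₂‖ * p u / (m * ⟪y₁, n₁⟫) := by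
  set c₁ := ⟪y₁, n₁⟫
  set c₂ := ⟪y₂, n₂⟫
  have hab : |⟪u, n₁⟫ - ⟪u, n₂⟫| ≤ ‖n₁ - n₂‖ * p u / m := by
    rw [← inner_sub_right, le_div_iff₀ hm]
    calc |⟪u, n₁ - n₂⟫| * m ≤ ‖u‖ * ‖n₁ - n₂‖ * m := by gcongr; exact abs_real_inner_le_norm _ _
      _ ≤ ‖n₁ - n₂‖ * p u := by nlinarith [hm' u, norm_nonneg (n₁ - n₂)]
  have hc : |c₂ - c₁| ≤ ‖n₁ - n₂‖ / m := by
    have h₁₂ := h₁.inner_le_inner_add hy₂ hm hm' n₂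
    have h₂₁ := h₂.inner_le_inner_add hy₁ hm hm' n₁
    rw [norm_sub_rev n₂] at h₁₂
    exact abs_le.mpr ⟨by linarith, by linarith⟩
  have hsplit : hyperplaneCoord y₁ n₁ u - hyperplaneCoord y₂ n₂ u =
      ((⟪u, n₁⟫ - ⟪u, n₂⟫) * c₂ + ⟪u, n₂⟫ * (c₂ - c₁)) / (c₁ * c₂) := by
    show ⟪u, n₁⟫ / c₁ - ⟪u, n₂⟫ / c₂ = _
    rw [div_sub_div _ _ hc₁.ne' hc₂.ne']
    ring
  rw [hsplit, abs_div, abs_of_pos (mul_pos hc₁ hc₂), div_le_iff₀ (mul_pos hc₁ hc₂)]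
  calc |(⟪u, n₁⟫ - ⟪u, n₂⟫) * c₂ + ⟪u, n₂⟫ * (c₂ - c₁)|
      ≤ |(⟪u, n₁⟫ - ⟪u, n₂⟫) * c₂| + |⟪u, n₂⟫ * (c₂ - c₁)| := abs_add_le _ _
    _ = |⟪u, n₁⟫ - ⟪u, n₂⟫| * c₂ + |⟪u, n₂⟫| * |c₂ - c₁| := by
        rw [abs_mul, abs_mul, abs_of_pos hc₂]
    _ ≤ ‖n₁ - n₂‖ * p u / m * c₂ + c₂ * p u * (‖n₁ - n₂‖ / m) := by
        gcongr
        exact h₂.abs_inner_le hp u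
    _ = 2 * ‖n₁ - n₂‖ * p u / (m * c₁) * (c₁ * c₂) := by field_simp; ring

lemma div_le_inner {β n : E} (h : IsSupportingNormal p ((p β)⁻¹ • β) n)
    (hp : ∀ u, p u = 0 → u = 0) (hβ : ‖β‖ = 1) (hn : ‖n‖ = 1)
    (hm' : ∀ u, m * ‖u‖ ≤ p u) (hM' : ∀ u, p u ≤ M * ‖u‖) : m / M ≤ ⟪β, n⟫ := by
  have hpβ : 0 < p β := (apply_nonneg p β).lt_of_ne' fun h0 => by simp [hp β h0] at hβ
  have hmβ : m ≤ p β := by simpa [hβ] using hm' β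
  have hMβ : p β ≤ M := by simpa [hβ] using hM' β
  have hM : 0 < M := hpβ.trans_le hMβ
  have hc := h.inv_le_inner hp hn hM'
  rw [real_inner_smul_left] at hc
  calc m / M = m * M⁻¹ := div_eq_mul_inv m M
    _ ≤ p β * ((p β)⁻¹ * ⟪β, n⟫) := mul_le_mul hmβ hc (inv_nonneg.mpr hM.le) hpβ.le
    _ = ⟪β, n⟫ := by field_simp

lemma div_lt_of_norm_add_lt {β₁ β₂ n₁ n₂ : E} (h₁ : IsSupportingNormal p ((p β₁)⁻¹ • β₁) n₁)
    (h₂ : IsSupportingNormal p ((p β₂)⁻¹ • β₂) n₂) (hp : ∀ u, p u = 0 → u = 0)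
    (hβ₁ : ‖β₁‖ = 1) (hβ₂ : ‖β₂‖ = 1) (hn₁ : ‖n₁‖ = 1) (hn₂ : ‖n₂‖ = 1)
    (hm' : ∀ u, m * ‖u‖ ≤ p u) (hM' : ∀ u, p u ≤ M * ‖u‖)
    (hβ : ‖β₁ - β₂‖ < ε) (hn : ‖n₁ + n₂‖ < ε) : m / M < ε := by
  have h₁' := h₁.div_le_inner hp hβ₁ hn₁ hm' hM'
  have h₂' := h₂.div_le_inner hp hβ₂ hn₂ hm' hM'
  have hsum : ⟪β₁, n₁⟫ + ⟪β₂, n₂⟫ = ⟪β₂, n₁ + n₂⟫ + ⟪β₁ - β₂, n₁⟫ := by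
    rw [inner_add_right, inner_sub_left]; ring
  have h₃ : ⟪β₂, n₁ + n₂⟫ ≤ ‖n₁ + n₂‖ := by simpa [hβ₂] using real_inner_le_norm β₂ (n₁ + n₂)
  have h₄ : ⟪β₁ - β₂, n₁⟫ ≤ ‖β₁ - β₂‖ := by simpa [hn₁] using real_inner_le_norm (β₁ - β₂) n₁
  linarith

lemma norm_sub_lt_of_arccos_abs_inner_lt {β₁ β₂ n₁ n₂ : E}
    (h₁ : IsSupportingNormal p ((p β₁)⁻¹ • β₁) n₁) (h₂ : IsSupportingNormal p ((p β₂)⁻¹ • β₂) n₂)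
    (hp : ∀ u, p u = 0 → u = 0) (hβ₁ : ‖β₁‖ = 1) (hβ₂ : ‖β₂‖ = 1) (hn₁ : ‖n₁‖ = 1)
    (hn₂ : ‖n₂‖ = 1) (hm' : ∀ u, m * ‖u‖ ≤ p u) (hM' : ∀ u, p u ≤ M * ‖u‖)
    (hβ : ‖β₁ - β₂‖ < ε) (hang : arccos |⟪n₁, n₂⟫| < ε) (hε : ε ≤ m / M) : ‖n₁ - n₂‖ < ε :=
  (norm_sub_lt_or_norm_add_lt_of_arccos_abs_inner_lt hn₁ hn₂ hang).resolve_right fun hn =>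
    (h₁.div_lt_of_norm_add_lt h₂ hp hβ₁ hβ₂ hn₁ hn₂ hm' hM' hβ hn).not_ge hε

end IsSupportingNormal

end SupportingHyperplanes

theorem backtrack_extra_distance_general {d : ℕ}
    (g : EuclideanSpace ℝ (Fin d) → ℝ)
    (hgadd : ∀ u v, g (u + v) ≤ g u + g v)
    (hgsmul : ∀ (t : ℝ) u, g (t • u) = |t| * g u)
    (hgdef : ∀ u, g u = 0 → u = 0) :
    ∃ ε₁ : ℝ, 0 < ε₁ ∧
      ∀ (θ α nθ nα x Z : EuclideanSpace ℝ (Fin d)) (r : ℝ),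
        ‖θ‖ = 1 → ‖α‖ = 1 → 0 < g θ → 0 < g α →
        ‖nθ‖ = 1 → ‖nα‖ = 1 →
        (∀ u, g u ≤ 1 → (inner ℝ u nθ : ℝ) ≤ (inner ℝ ((g θ)⁻¹ • θ) nθ : ℝ)) →
        (∀ u, g u ≤ 1 → (inner ℝ u nα : ℝ) ≤ (inner ℝ ((g α)⁻¹ • α) nα : ℝ)) →
        1 / Real.sqrt d ≤ |(inner ℝ θ nθ : ℝ)| →
        Real.arccos |(inner ℝ nθ nα : ℝ)| < ε₁ →
        ‖α - θ‖ < ε₁ →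
        (∃ t : ℝ, 0 < t ∧ x = t • α) →
        0 < r →
        (inner ℝ Z nθ : ℝ) / (inner ℝ ((g θ)⁻¹ • θ) nθ : ℝ) ≤ -r →
        g Z < 2 * g x →
        g x / 2 ≤ (inner ℝ x nθ : ℝ) / (inner ℝ ((g θ)⁻¹ • θ) nθ : ℝ) →
        (1/2) * (r + g Z) ≤ g Z + g (x - Z) - g x := by
  let p : Seminorm ℝ (EuclideanSpace ℝ (Fin d)) :=
    Seminorm.of g hgadd fun t u => by rw [Real.norm_eq_abs]; exact hgsmul t u
  obtain ⟨m, hm, hm'⟩ := p.exists_mul_norm_le_s19 hgdef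
  obtain ⟨M, hM, hM'⟩ := p.bound_of_continuous_normedSpace p.continuous_of_finiteDimensional_s19
  refine ⟨m / (4 * M), by positivity, ?_⟩
  rintro θ α nθ nα x Z r hθ hα hgθ hgα hnθ hnα hsθ hsα - hang hαθ ⟨t, ht, rfl⟩ hr hZ - -
  change 0 < p θ at hgθ
  change 0 < p α at hgα
  change IsSupportingNormal p ((p θ)⁻¹ • θ) nθ at hsθ
  change IsSupportingNormal p ((p α)⁻¹ • α) nα at hsα
  change hyperplaneCoord ((p θ)⁻¹ • θ) nθ Z ≤ -r at hZ
  change 1 / 2 * (r + p Z) ≤ p Z + p (t • α - Z) - p (t • α)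
  have hcθ := hsθ.inv_le_inner hgdef hnθ hM'
  have hcα := hsα.inv_le_inner hgdef hnα hM'
  have hn : ‖nθ - nα‖ < m / (4 * M) :=
    hsθ.norm_sub_lt_of_arccos_abs_inner_lt hsα hgdef hθ hα hnθ hnα hm' hM'
      (by rwa [norm_sub_rev]) hang (div_le_div_of_nonneg_left hm.le hM (by linarith))
  have hΦ : ∀ u, |hyperplaneCoord ((p θ)⁻¹ • θ) nθ u - hyperplaneCoord ((p α)⁻¹ • α) nα u|
      ≤ p u / 2 := fun u => calc
    _ ≤ 2 * ‖nθ - nα‖ * p u / (m * ⟪(p θ)⁻¹ • θ, nθ⟫) :=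
        hsθ.abs_hyperplaneCoord_sub_le hsα hgdef (p.apply_inv_smul_self hgθ).le
          (p.apply_inv_smul_self hgα).le ((inv_pos.mpr hM).trans_le hcθ)
          ((inv_pos.mpr hM).trans_le hcα) hm hm' u
    _ ≤ 2 * (m / (4 * M)) * p u / (m * M⁻¹) := by gcongr
    _ = p u / 2 := by field_simp; ring
  have hxZ := hsα.hyperplaneCoord_le hgdef ((inv_pos.mpr hM).trans_le hcα) (t • α - Z)
  rw [hyperplaneCoord_sub, hyperplaneCoord_inv_smul_smul p hgα
    ((inv_pos.mpr hM).trans_le hcα).ne' ht.le] at hxZ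
  linarith [(abs_le.mp (hΦ Z)).1, apply_nonneg p Z]

/-- the Claim (2.18) in the proof of Lemma 2.2: for sufficiently
small `ε₁ > 0` (depending only on the norm `g` and `d`), if a point `Z`
backtracks `g`-distance at least `r` behind the hyperplane `H_{θ,0}` (measured
via `Φ_θ(u) = ⟨u,n_θ⟩ / ⟨y_θ,n_θ⟩`), `g(Z) < 2 g(x)`, `Φ_θ(x) ≥ g(x)/2`, `x`
points in direction `α`, and the hyperplane/direction data for `α` and `θ` are
within `ε₁` of each other, then
`g(Z) + g(x - Z) - g(x) ≥ (1/2)(r + g(Z))`. -/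
theorem backtrack_extra_distance {d : ℕ} (hd : 0 < d)
    (g : EuclideanSpace ℝ (Fin d) → ℝ)
    (hg0 : ∀ u, 0 ≤ g u)
    (hgadd : ∀ u v, g (u + v) ≤ g u + g v)
    (hgsmul : ∀ (t : ℝ) u, g (t • u) = |t| * g u)
    (hgdef : ∀ u, g u = 0 → u = 0) :
    ∃ ε₁ : ℝ, 0 < ε₁ ∧
      ∀ (θ α nθ nα x Z : EuclideanSpace ℝ (Fin d)) (r : ℝ),
        ‖θ‖ = 1 → ‖α‖ = 1 → 0 < g θ → 0 < g α →
        ‖nθ‖ = 1 → ‖nα‖ = 1 →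
        (∀ u, g u ≤ 1 → (inner ℝ u nθ : ℝ) ≤ (inner ℝ ((g θ)⁻¹ • θ) nθ : ℝ)) →
        (∀ u, g u ≤ 1 → (inner ℝ u nα : ℝ) ≤ (inner ℝ ((g α)⁻¹ • α) nα : ℝ)) →
        1 / Real.sqrt d ≤ |(inner ℝ θ nθ : ℝ)| →
        Real.arccos |(inner ℝ nθ nα : ℝ)| < ε₁ →
        ‖α - θ‖ < ε₁ →
        (∃ t : ℝ, 0 < t ∧ x = t • α) →
        0 < r →
        (inner ℝ Z nθ : ℝ) / (inner ℝ ((g θ)⁻¹ • θ) nθ : ℝ) ≤ -r →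
        g Z < 2 * g x →
        g x / 2 ≤ (inner ℝ x nθ : ℝ) / (inner ℝ ((g θ)⁻¹ • θ) nθ : ℝ) →
        (1/2) * (r + g Z) ≤ g Z + g (x - Z) - g x :=
  backtrack_extra_distance_general g hgadd hgsmul hgdef
end
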